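/- arXiv:2305.09065 — 13 statements merged into one kernel-verified Lean document; each statement's English description precedes it below -/
import Mathlib

section
/- Let n ≥ 1 be an integer and let φ₀, a, v be real numbers with φ₀ < a ≤ v. Then ∫_a^v (t−a)^{n−1}/(t−φ₀)^n dt = log((v−φ₀)/(a−φ₀)) − Σ_{k=1}^{n−1} (v−a)^k/(k·(v−φ₀)^k), and moreover this common value equals the convergent series Σ_{k=n}^∞ (v−a)^k/(k·(v−φ₀)^k). -/
open MeasureTheory Real

/-- Let `n ≥ 1` be an integer and `φ₀ < a ≤ v` real numbers. Then
`∫_a^v (t−a)^{n−1}/(t−φ₀)^n dt = log((v−φ₀)/(a−φ₀)) − Σ_{k=1}^{n−1} (v−a)^k/(k·(v−φ₀)^k)`,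
and this common value equals the convergent series `Σ_{k=n}^∞ (v−a)^k/(k·(v−φ₀)^k)`. -/
theorem integral_sub_pow_div_eq_log_sub_sum
    (n : ℕ) (hn : 1 ≤ n) (φ₀ a v : ℝ) (hφa : φ₀ < a) (hav : a ≤ v) :
    (∫ t in a..v, (t - a) ^ (n - 1) / (t - φ₀) ^ n) =
        Real.log ((v - φ₀) / (a - φ₀)) -
          ∑ k ∈ Finset.Icc 1 (n - 1), (v - a) ^ k / ((k : ℝ) * (v - φ₀) ^ k) ∧
      Summable (fun k : ℕ => (v - a) ^ (k + n) / (((k : ℝ) + n) * (v - φ₀) ^ (k + n))) ∧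
      (∫ t in a..v, (t - a) ^ (n - 1) / (t - φ₀) ^ n) =
        ∑' k : ℕ, (v - a) ^ (k + n) / (((k : ℝ) + n) * (v - φ₀) ^ (k + n)) := by
  obtain ⟨m, rfl⟩ : ∃ m, n = m + 1 := ⟨n - 1, (Nat.succ_pred_eq_of_pos hn).symm⟩
  simp only [Nat.add_sub_cancel]
  have ha0 : (0:ℝ) < a - φ₀ := by linarith
  have hv0 : (0:ℝ) < v - φ₀ := by linarith
  -- the antiderivative
  set F : ℝ → ℝ := fun t => Real.log (t - φ₀) -
    ∑ k ∈ Finset.range m, ((t - a)/(t - φ₀))^(k+1)/((k:ℝ)+1) with hF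
  have key : ∀ t ∈ Set.uIcc a v, HasDerivAt F ((t - a)^m/(t - φ₀)^(m+1)) t := by
    intro t ht
    rw [Set.uIcc_of_le hav] at ht
    have ht0 : (0:ℝ) < t - φ₀ := by linarith [ht.1]
    have ht0' : t - φ₀ ≠ 0 := ne_of_gt ht0
    have hne : (t - a)/(t - φ₀) ≠ 1 := by
      intro h
      rw [div_eq_one_iff_eq ht0'] at h
      linarith
    have hne' : (t - a)/(t - φ₀) - 1 ≠ 0 := sub_ne_zero.2 hne
    have hlog : HasDerivAt (fun t => Real.log (t - φ₀)) (1/(t - φ₀)) t := by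
      simpa using ((hasDerivAt_id t).sub_const φ₀).log ht0'
    have hrd : HasDerivAt (fun t => (t - a)/(t - φ₀)) ((a - φ₀)/(t - φ₀)^2) t := by
      have h := ((hasDerivAt_id t).sub_const a).div ((hasDerivAt_id t).sub_const φ₀) ht0'
      refine h.congr_deriv ?_
      symm
      simp only [id_eq]
      rw [div_left_inj' (by positivity)]
      ring
    have hsum : HasDerivAt (fun t => ∑ k ∈ Finset.range m, ((t - a)/(t - φ₀))^(k+1)/((k:ℝ)+1))
        (∑ k ∈ Finset.range m, ((t - a)/(t - φ₀))^k * ((a - φ₀)/(t - φ₀)^2)) t := by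
      apply HasDerivAt.fun_sum
      intro k _
      have hk : ((k:ℝ)+1) ≠ 0 := by positivity
      have h := (hrd.pow (k+1)).div_const ((k:ℝ)+1)
      refine h.congr_deriv ?_
      symm
      simp only [Nat.add_sub_cancel]
      push_cast
      rw [eq_div_iff hk]
      ring
    have h := hlog.fun_sub hsum
    refine h.congr_deriv ?_
    symm
    rw [← Finset.sum_mul, geom_sum_eq hne]
    have haφ : φ₀ - a ≠ 0 := ne_of_lt (by linarith)
    have h2 : (t - a)/(t - φ₀) - 1 = (φ₀ - a)/(t - φ₀) := by field_simp; ring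
    have h3 : ∀ X : ℝ, X/((φ₀ - a)/(t - φ₀)) * ((a - φ₀)/(t - φ₀)^2) = -X/(t - φ₀) := by
      intro X; field_simp; ring
    rw [h2, div_pow, h3, pow_succ, ← div_div, div_sub_div_same]
    congr 1
    ring
  have hint : IntervalIntegrable (fun t => (t - a)^m/(t - φ₀)^(m+1)) volume a v := by
    apply ContinuousOn.intervalIntegrable
    apply ContinuousOn.div (by fun_prop) (by fun_prop)
    intro t ht
    rw [Set.uIcc_of_le hav] at ht
    have : (0:ℝ) < t - φ₀ := by linarith [ht.1]
    positivity
  have hI := intervalIntegral.integral_eq_sub_of_hasDerivAt key hint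
  have hFa : F a = Real.log (a - φ₀) := by
    simp [hF, zero_pow (Nat.succ_ne_zero _)]
  have hFv : F v = Real.log (v - φ₀) -
      ∑ k ∈ Finset.range m, ((v - a)/(v - φ₀))^(k+1)/((k:ℝ)+1) := rfl
  -- identify the finite sums
  have hterm : ∀ k : ℕ, ((v - a)/(v - φ₀))^(k+1)/((k:ℝ)+1)
      = (v - a)^(k+1)/(((k:ℝ)+1)*(v - φ₀)^(k+1)) := by
    intro k
    rw [div_pow, div_div]
    ring_nf
  have hIcc : ∑ k ∈ Finset.Icc 1 m, (v - a)^k/((k:ℝ)*(v - φ₀)^k)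
      = ∑ k ∈ Finset.range m, ((v - a)/(v - φ₀))^(k+1)/((k:ℝ)+1) := by
    rw [← Finset.Ico_add_one_right_eq_Icc, Finset.sum_Ico_eq_sum_range]
    apply Finset.sum_congr (by simp)
    intro k _
    rw [hterm k]
    push_cast
    ring_nf
  have part1 : (∫ t in a..v, (t - a)^m/(t - φ₀)^(m+1)) =
      Real.log ((v - φ₀)/(a - φ₀)) -
        ∑ k ∈ Finset.Icc 1 m, (v - a)^k/((k:ℝ)*(v - φ₀)^k) := by
    rw [hI, hFv, hFa, hIcc, Real.log_div (ne_of_gt hv0) (ne_of_gt ha0)]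
    ring
  -- series part
  set r : ℝ := (v - a)/(v - φ₀) with hrdef
  have hr0 : 0 ≤ r := div_nonneg (by linarith) (le_of_lt hv0)
  have hr1 : r < 1 := by
    rw [div_lt_one hv0]; linarith
  have habs : |r| < 1 := abs_lt.2 ⟨by linarith, hr1⟩
  have hS := Real.hasSum_pow_div_log_of_abs_lt_one habs
  have hgsum : Summable (fun k : ℕ => r^(k+1)/((k:ℝ)+1)) := hS.summable
  have hfun : (fun k : ℕ => (v - a)^(k+(m+1))/(((k:ℝ)+((m+1:ℕ):ℝ))*(v - φ₀)^(k+(m+1))))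
      = fun k : ℕ => r^((k+m)+1)/(((k+m:ℕ):ℝ)+1) := by
    funext k
    rw [hrdef, div_pow, div_div]
    push_cast
    ring_nf
  have hsummable : Summable (fun k : ℕ => (v - a)^(k+(m+1))/(((k:ℝ)+((m+1:ℕ):ℝ))*(v - φ₀)^(k+(m+1)))) := by
    rw [hfun]
    exact (summable_nat_add_iff m).2 hgsum
  have htsum : (∑' k : ℕ, (v - a)^(k+(m+1))/(((k:ℝ)+((m+1:ℕ):ℝ))*(v - φ₀)^(k+(m+1))))
      = -Real.log (1 - r) - ∑ k ∈ Finset.range m, r^(k+1)/((k:ℝ)+1) := by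
    rw [hfun]
    have h := Summable.sum_add_tsum_nat_add (f := fun k : ℕ => r^(k+1)/((k:ℝ)+1)) m hgsum
    rw [hS.tsum_eq] at h
    linarith
  have hlog1r : -Real.log (1 - r) = Real.log ((v - φ₀)/(a - φ₀)) := by
    have h1r : 1 - r = (a - φ₀)/(v - φ₀) := by
      rw [hrdef]; field_simp; ring
    rw [h1r, ← Real.log_inv, inv_div]
  refine ⟨part1, hsummable, ?_⟩
  rw [part1, htsum, hlog1r, hIcc]
end

section
/- Let n ≥ 1 be an integer, λ a real number, and φ₀, a, v real numbers with φ₀ < a ≤ v. Then ∫_a^v [ (t−a)^{n−1}/(t−φ₀)^n − (1−λ)·(t−a)^n/(t−φ₀)^{n+1} ] dt = λ·log((v−φ₀)/(a−φ₀)) − λ·Σ_{k=1}^{n−1} (v−a)^k/(k·(v−φ₀)^k) + (1−λ)·(v−a)^n/(n·(v−φ₀)^n), and this common value equals (v−a)^n/(n·(v−φ₀)^n) + λ·Σ_{k=n+1}^∞ (v−a)^k/(k·(v−φ₀)^k). -/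
open MeasureTheory Real

lemma aux_hasDerivAt (a φ₀ : ℝ) (k : ℕ) (hk : 1 ≤ k) {t : ℝ} (ht : t - φ₀ ≠ 0) :
    HasDerivAt (fun t => (t - a) ^ k / ((k : ℝ) * (t - φ₀) ^ k))
      ((t - a) ^ (k - 1) / (t - φ₀) ^ k - (t - a) ^ k / (t - φ₀) ^ (k + 1)) t := by
  obtain ⟨m, rfl⟩ : ∃ m, k = m + 1 := ⟨k - 1, (Nat.succ_pred_eq_of_pos hk).symm⟩
  have h1 : HasDerivAt (fun t => (t - a) ^ (m + 1)) (((m : ℝ) + 1) * (t - a) ^ m) t := by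
    simpa using ((hasDerivAt_id t).sub_const a).fun_pow (m + 1)
  have h2' : HasDerivAt (fun t => (t - φ₀) ^ (m + 1)) (((m : ℝ) + 1) * (t - φ₀) ^ m) t := by
    simpa using ((hasDerivAt_id t).sub_const φ₀).fun_pow (m + 1)
  have h2 := h2'.const_mul ((m : ℝ) + 1)
  have hq : ((m : ℝ) + 1) * (t - φ₀) ^ (m + 1) ≠ 0 :=
    mul_ne_zero (by positivity) (pow_ne_zero _ ht)
  have := h1.fun_div h2 hq
  convert this using 1
  · rfl
  · rfl
  · funext s; push_cast; ring
  · simp only [Nat.add_sub_cancel]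
    field_simp
    ring

/-- Let `n ≥ 1` be an integer, `λ` a real number, and `φ₀ < a ≤ v` real numbers. Then
`∫_a^v [(t−a)^{n−1}/(t−φ₀)^n − (1−λ)(t−a)^n/(t−φ₀)^{n+1}] dt
  = λ·log((v−φ₀)/(a−φ₀)) − λ·Σ_{k=1}^{n−1} (v−a)^k/(k(v−φ₀)^k) + (1−λ)(v−a)^n/(n(v−φ₀)^n)`,
and this common value equals
`(v−a)^n/(n(v−φ₀)^n) + λ·Σ_{k=n+1}^∞ (v−a)^k/(k(v−φ₀)^k)`. -/
theorem integral_sub_pow_div_mixed_eq_log_sub_sum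
    (n : ℕ) (hn : 1 ≤ n) (lam φ₀ a v : ℝ) (hφa : φ₀ < a) (hav : a ≤ v) :
    (∫ t in a..v,
        ((t - a) ^ (n - 1) / (t - φ₀) ^ n - (1 - lam) * (t - a) ^ n / (t - φ₀) ^ (n + 1))) =
        lam * Real.log ((v - φ₀) / (a - φ₀)) -
          lam * ∑ k ∈ Finset.Icc 1 (n - 1), (v - a) ^ k / ((k : ℝ) * (v - φ₀) ^ k) +
          (1 - lam) * (v - a) ^ n / ((n : ℝ) * (v - φ₀) ^ n) ∧
      Summable
        (fun k : ℕ => (v - a) ^ (k + (n + 1)) / (((k : ℝ) + (n + 1)) * (v - φ₀) ^ (k + (n + 1)))) ∧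
      (∫ t in a..v,
          ((t - a) ^ (n - 1) / (t - φ₀) ^ n - (1 - lam) * (t - a) ^ n / (t - φ₀) ^ (n + 1))) =
        (v - a) ^ n / ((n : ℝ) * (v - φ₀) ^ n) +
          lam * ∑' k : ℕ,
            (v - a) ^ (k + (n + 1)) / (((k : ℝ) + (n + 1)) * (v - φ₀) ^ (k + (n + 1))) := by

  have part1 : (∫ t in a..v,
        ((t - a) ^ (n - 1) / (t - φ₀) ^ n - (1 - lam) * (t - a) ^ n / (t - φ₀) ^ (n + 1))) =
        lam * Real.log ((v - φ₀) / (a - φ₀)) -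
          lam * ∑ k ∈ Finset.Icc 1 (n - 1), (v - a) ^ k / ((k : ℝ) * (v - φ₀) ^ k) +
          (1 - lam) * (v - a) ^ n / ((n : ℝ) * (v - φ₀) ^ n) := by
    have haφ : (0:ℝ) < a - φ₀ := by linarith
    have hvφ : (0:ℝ) < v - φ₀ := by linarith
    set F : ℝ → ℝ := fun t => lam * Real.log (t - φ₀)
        - lam * ∑ k ∈ Finset.Icc 1 (n-1), (t-a)^k/((k:ℝ)*(t-φ₀)^k)
        + (1-lam) * ((t-a)^n/((n:ℝ)*(t-φ₀)^n)) with hF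
    have ht0 : ∀ t ∈ Set.uIcc a v, t - φ₀ ≠ 0 := by
      rw [Set.uIcc_of_le hav]
      intro t ht
      have := ht.1
      nlinarith
    have hderiv : ∀ t ∈ Set.uIcc a v, HasDerivAt F
        ((t - a) ^ (n - 1) / (t - φ₀) ^ n - (1 - lam) * (t - a) ^ n / (t - φ₀) ^ (n + 1)) t := by
      intro t ht
      have h0 := ht0 t ht
      have hlog : HasDerivAt (fun t => Real.log (t - φ₀)) (1 / (t - φ₀)) t := by
        simpa using ((hasDerivAt_id t).sub_const φ₀).log h0
      have hsum : HasDerivAt (fun t => ∑ k ∈ Finset.Icc 1 (n-1), (t-a)^k/((k:ℝ)*(t-φ₀)^k))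
          (∑ k ∈ Finset.Icc 1 (n-1),
            ((t - a) ^ (k - 1) / (t - φ₀) ^ k - (t - a) ^ k / (t - φ₀) ^ (k + 1))) t := by
        apply HasDerivAt.fun_sum
        intro k hk
        exact aux_hasDerivAt a φ₀ k (Finset.mem_Icc.mp hk).1 h0
      have hsumval : (∑ k ∈ Finset.Icc 1 (n-1),
          ((t - a) ^ (k - 1) / (t - φ₀) ^ k - (t - a) ^ k / (t - φ₀) ^ (k + 1)))
          = 1 / (t - φ₀) - (t - a) ^ (n - 1) / (t - φ₀) ^ n := by
        have hIcc : Finset.Icc 1 (n-1) = Finset.Ico 1 n := by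
          rw [← Finset.Ico_add_one_right_eq_Icc]
          congr 1
          omega
        rw [hIcc, Finset.sum_Ico_eq_sum_range]
        have : ∀ i ∈ Finset.range (n - 1),
            (t - a) ^ (1 + i - 1) / (t - φ₀) ^ (1 + i) - (t - a) ^ (1 + i) / (t - φ₀) ^ (1 + i + 1)
            = (fun j => (t - a) ^ j / (t - φ₀) ^ (j + 1)) i
              - (fun j => (t - a) ^ j / (t - φ₀) ^ (j + 1)) (i + 1) := by
          intro i _
          have e1 : 1 + i - 1 = i := by omega
          have e2 : 1 + i = i + 1 := by omega
          rw [e1, e2]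
        rw [Finset.sum_congr rfl this, Finset.sum_range_sub']
        have h2 : n - 1 + 1 = n := by omega
        simp [h2]
      have hlast := aux_hasDerivAt a φ₀ n hn h0
      have := ((hlog.const_mul lam).sub (hsum.const_mul lam)).add (hlast.const_mul (1 - lam))
      convert this using 1
      · rfl
      · rfl
      · rfl
      rw [hsumval]
      ring
    have hcont : ContinuousOn (fun t =>
        (t - a) ^ (n - 1) / (t - φ₀) ^ n - (1 - lam) * (t - a) ^ n / (t - φ₀) ^ (n + 1))
        (Set.uIcc a v) := by
      apply ContinuousOn.sub
      · exact ContinuousOn.div (by fun_prop) (by fun_prop)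
          (fun t ht => pow_ne_zero _ (ht0 t ht))
      · exact ContinuousOn.div (by fun_prop) (by fun_prop)
          (fun t ht => pow_ne_zero _ (ht0 t ht))
    have hint := intervalIntegral.integral_eq_sub_of_hasDerivAt hderiv hcont.intervalIntegrable
    rw [hint]
    have hFa : F a = lam * Real.log (a - φ₀) := by
      simp only [hF, sub_self]
      rw [Finset.sum_eq_zero, zero_pow (by omega : n ≠ 0)]
      · ring
      · intro k hk
        have hk1 := (Finset.mem_Icc.mp hk).1
        rw [zero_pow (by omega : k ≠ 0), zero_div]
    rw [hFa]
    simp only [hF]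
    rw [Real.log_div (ne_of_gt hvφ) (ne_of_gt haφ)]
    ring
  have part2 : Summable
        (fun k : ℕ => (v - a) ^ (k + (n + 1)) / (((k : ℝ) + (n + 1)) * (v - φ₀) ^ (k + (n + 1)))) ∧
      lam * Real.log ((v - φ₀) / (a - φ₀)) -
          lam * ∑ k ∈ Finset.Icc 1 (n - 1), (v - a) ^ k / ((k : ℝ) * (v - φ₀) ^ k) +
          (1 - lam) * (v - a) ^ n / ((n : ℝ) * (v - φ₀) ^ n) =
        (v - a) ^ n / ((n : ℝ) * (v - φ₀) ^ n) +
          lam * ∑' k : ℕ,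
            (v - a) ^ (k + (n + 1)) / (((k : ℝ) + (n + 1)) * (v - φ₀) ^ (k + (n + 1))) := by
    have haφ : (0:ℝ) < a - φ₀ := by linarith
    have hvφ : (0:ℝ) < v - φ₀ := by linarith
    have hva : (0:ℝ) ≤ v - a := by linarith
    set c : ℕ → ℝ := fun j => (v - a) ^ j / ((j : ℝ) * (v - φ₀) ^ j) with hc
    have hx : |(v - a) / (v - φ₀)| < 1 := by
      rw [abs_div, abs_of_nonneg hva, abs_of_pos hvφ, div_lt_one hvφ]
      linarith
    have hs := Real.hasSum_pow_div_log_of_abs_lt_one hx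
    have h1x : 1 - (v - a) / (v - φ₀) = (a - φ₀) / (v - φ₀) := by
      field_simp
      ring
    have hcs : HasSum (fun k : ℕ => c (k + 1)) (Real.log ((v - φ₀) / (a - φ₀))) := by
      have hfun : (fun k : ℕ => ((v - a) / (v - φ₀)) ^ (k + 1) / ((k : ℝ) + 1))
          = fun k : ℕ => c (k + 1) := by
        funext k
        simp only [hc]
        push_cast
        rw [div_pow, div_div, mul_comm]
      have hval : -Real.log (1 - (v - a) / (v - φ₀)) = Real.log ((v - φ₀) / (a - φ₀)) := by
        rw [h1x, ← Real.log_inv, inv_div]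
      rw [← hfun, ← hval]
      exact hs
    have hsc : Summable c := (summable_nat_add_iff 1).mp hcs.summable
    have hc0 : c 0 = 0 := by simp [hc]
    have htot : ∑' j, c j = Real.log ((v - φ₀) / (a - φ₀)) := by
      rw [Summable.tsum_eq_zero_add hsc, hc0, zero_add, hcs.tsum_eq]
    -- summability goal
    have hcast : (fun k : ℕ => (v - a) ^ (k + (n + 1)) / (((k : ℝ) + (n + 1)) * (v - φ₀) ^ (k + (n + 1))))
        = fun k : ℕ => c (k + (n + 1)) := by
      funext k
      simp only [hc]
      push_cast
      ring_nf
    have hsumm : Summable (fun k : ℕ => c (k + (n + 1))) := (summable_nat_add_iff (n + 1)).mpr hsc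
    refine ⟨by rw [hcast]; exact hsumm, ?_⟩
    have htail : ∑' k : ℕ, c (k + (n + 1)) = Real.log ((v - φ₀) / (a - φ₀)) - ∑ i ∈ Finset.range (n + 1), c i := by
      have := Summable.sum_add_tsum_nat_add (f := c) (n + 1) hsc
      rw [htot] at this
      linarith
    have hrange : ∑ i ∈ Finset.range (n + 1), c i
        = (∑ k ∈ Finset.Icc 1 (n - 1), c k) + c n := by
      rw [Finset.sum_range_succ]
      congr 1
      have hIcc : Finset.Icc 1 (n-1) = Finset.Ico 1 n := by
        rw [← Finset.Ico_add_one_right_eq_Icc]; congr 1; omega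
      rw [hIcc, Finset.sum_Ico_eq_sum_range]
      obtain ⟨m, rfl⟩ : ∃ m, n = m + 1 := ⟨n - 1, by omega⟩
      rw [Finset.sum_range_succ' c m, hc0, add_zero]
      simp [add_comm]
    rw [hcast, htail, hrange]
    simp only [hc]
    ring
  exact ⟨part1, part2.1, by rw [part1]; exact part2.2⟩
end

section
/- Let n ≥ 1 be an integer and λ ∈ (0,1] a real number. Then there exists a unique k ∈ (0,1) such that λ·∫_k^1 (t−k)^{n−1}/t^n dt = (1−k)^{n−1}. -/
open MeasureTheory Set


noncomputable def lowInfoJ (n : ℕ) (k : ℝ) : ℝ := ∫ s in (0:ℝ)..1, s^(n-1) / (k*(1-s)+s)^n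

lemma lowInfo_den_pos {k s : ℝ} (hk : 0 < k) (hk1 : k ≤ 1) (hs0 : 0 ≤ s) :
    0 < k*(1-s)+s := by nlinarith

lemma lowInfo_integrand_contOn (n : ℕ) {k : ℝ} (hk : 0 < k) (hk1 : k ≤ 1) :
    ContinuousOn (fun s : ℝ => s^(n-1) / (k*(1-s)+s)^n) (Icc (0:ℝ) 1) := by
  apply ContinuousOn.div (by fun_prop) (by fun_prop)
  intro s hs
  exact pow_ne_zero _ (lowInfo_den_pos hk hk1 hs.1).ne'

lemma lowInfo_integrand_intble (n : ℕ) {k : ℝ} (hk : 0 < k) (hk1 : k ≤ 1) {a b : ℝ}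
    (ha : a ∈ Icc (0:ℝ) 1) (hb : b ∈ Icc (0:ℝ) 1) :
    IntervalIntegrable (fun s : ℝ => s^(n-1) / (k*(1-s)+s)^n) volume a b := by
  apply ContinuousOn.intervalIntegrable
  apply (lowInfo_integrand_contOn n hk hk1).mono
  exact uIcc_subset_Icc ha hb

lemma lowInfoJ_pos (n : ℕ) {k : ℝ} (hk : 0 < k) (hk1 : k ≤ 1) : 0 < lowInfoJ n k := by
  have h := intervalIntegral.integral_lt_integral_of_continuousOn_of_le_of_exists_lt
    (f := fun _ : ℝ => (0:ℝ)) (g := fun s : ℝ => s^(n-1) / (k*(1-s)+s)^n)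
    (a := 0) (b := 1) one_pos continuousOn_const (lowInfo_integrand_contOn n hk hk1)
    (fun x hx => div_nonneg (pow_nonneg hx.1.le _) (pow_nonneg (lowInfo_den_pos hk hk1 hx.1.le).le _))
    ⟨1/2, by norm_num, by
      apply div_pos (pow_pos (by norm_num) _) (pow_pos (by norm_num; linarith) _)⟩
  simpa [lowInfoJ] using h

lemma lowInfoJ_anti (n : ℕ) (hn : n ≠ 0) {k1 k2 : ℝ} (h0 : 0 < k1) (h12 : k1 < k2) (h2 : k2 ≤ 1) :
    lowInfoJ n k2 < lowInfoJ n k1 := by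
  apply intervalIntegral.integral_lt_integral_of_continuousOn_of_le_of_exists_lt
    one_pos (lowInfo_integrand_contOn n (by linarith) h2) (lowInfo_integrand_contOn n h0 (by linarith))
  · intro x hx
    have hd1 : 0 < k1*(1-x)+x := lowInfo_den_pos h0 (by linarith) hx.1.le
    have hd2 : k1*(1-x)+x ≤ k2*(1-x)+x := by nlinarith [hx.2]
    exact div_le_div_of_nonneg_left (pow_nonneg hx.1.le _) (pow_pos hd1 _)
      (pow_le_pow_left₀ hd1.le hd2 _) |>.trans_eq rfl
  · refine ⟨1/2, by norm_num, ?_⟩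
    have hd1 : (0:ℝ) < k1*(1-1/2)+1/2 := by norm_num; linarith
    have hd2 : k1*(1-(1/2:ℝ))+1/2 < k2*(1-1/2)+1/2 := by norm_num; linarith
    exact div_lt_div_of_pos_left (pow_pos (by norm_num) _) (pow_pos hd1 _)
      (pow_lt_pow_left₀ hd2 hd1.le hn ) |>.trans_eq rfl


lemma lowInfoJ_contAt (n : ℕ) {k0 : ℝ} (h0 : 0 < k0) : ContinuousAt (lowInfoJ n) k0 := by
  set ε : ℝ := min (k0/2) (1/2) with hεdef
  have hεpos : 0 < ε := lt_min (by linarith) (by norm_num)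
  have hε1 : ε ≤ 1 := le_trans (min_le_right _ _) (by norm_num)
  set c : ℝ → ℝ := fun s => min (max s 0) 1 with hcdef
  have hcmem : ∀ s, c s ∈ Icc (0:ℝ) 1 :=
    fun s => ⟨le_min (le_max_right _ _) zero_le_one, min_le_right _ _⟩
  set F : ℝ → ℝ → ℝ := fun k s => (c s)^(n-1) / ((max k ε)*(1 - c s) + c s)^n with hFdef
  have hFden : ∀ k s, 0 < (max k ε)*(1 - c s) + c s := by
    intro k s
    have h1 := hcmem s
    have h2 : ε ≤ max k ε := le_max_right _ _
    nlinarith [h1.1, h1.2]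
  have hFcont : Continuous (Function.uncurry F) := by
    apply Continuous.div (by fun_prop) (by fun_prop)
    intro p
    exact pow_ne_zero _ (hFden p.1 p.2).ne'
  have key : Continuous fun k => ∫ s in (0:ℝ)..1, F k s :=
    intervalIntegral.continuous_parametric_intervalIntegral_of_continuous' hFcont 0 1
  apply key.continuousAt.congr
  have hek : ε < k0 := lt_of_le_of_lt (min_le_left _ _) (by linarith)
  filter_upwards [eventually_gt_nhds hek] with k hk
  apply intervalIntegral.integral_congr
  intro s hs
  rw [uIcc_of_le (by norm_num : (0:ℝ) ≤ 1)] at hs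
  have h1 : c s = s := by
    simp only [hcdef]
    rw [max_eq_left hs.1, min_eq_left hs.2]
  have h2 : max k ε = k := max_eq_left hk.le
  simp only [hFdef, lowInfoJ, h1, h2]

lemma lowInfoJ_le (n : ℕ) {k : ℝ} (hk : 0 < k) (hk1 : k ≤ 1) : lowInfoJ n k ≤ 1/k^n := by
  have h2 : (∫ s in (0:ℝ)..1, 1/k^n) = 1/k^n := by simp
  rw [lowInfoJ, ← h2]
  apply intervalIntegral.integral_mono_on (by norm_num)
    (lowInfo_integrand_intble n hk hk1 (by norm_num) (by norm_num))
    (intervalIntegrable_const)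
  intro s hs
  have hd : k ≤ k*(1-s)+s := by nlinarith [hs.1, hs.2]
  exact div_le_div₀ zero_le_one (pow_le_one₀ hs.1 hs.2) (pow_pos hk _)
    (pow_le_pow_left₀ hk.le hd _)

lemma lowInfoJ_ge (n : ℕ) (hn : 1 ≤ n) {k : ℝ} (hk : 0 < k) (hk1 : k ≤ 1) :
    -Real.log k / 2^n ≤ lowInfoJ n k := by
  have hi1 := lowInfo_integrand_intble n hk hk1 (a := 0) (b := k)
    (show (0:ℝ) ∈ Icc (0:ℝ) 1 by norm_num) ⟨hk.le, hk1⟩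
  have hi2 := lowInfo_integrand_intble n hk hk1 (a := k) (b := 1) ⟨hk.le, hk1⟩
    (show (1:ℝ) ∈ Icc (0:ℝ) 1 by norm_num)
  have hsplit : lowInfoJ n k = (∫ s in (0:ℝ)..k, s^(n-1) / (k*(1-s)+s)^n)
      + ∫ s in k..(1:ℝ), s^(n-1) / (k*(1-s)+s)^n := by
    rw [lowInfoJ, intervalIntegral.integral_add_adjacent_intervals hi1 hi2]
  have h1 : 0 ≤ ∫ s in (0:ℝ)..k, s^(n-1) / (k*(1-s)+s)^n := by
    apply intervalIntegral.integral_nonneg hk.le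
    intro s hs
    exact div_nonneg (pow_nonneg hs.1 _) (pow_nonneg (lowInfo_den_pos hk hk1 hs.1).le _)
  have h2 : (∫ s in k..(1:ℝ), (2^n)⁻¹ * s⁻¹) ≤ ∫ s in k..(1:ℝ), s^(n-1) / (k*(1-s)+s)^n := by
    apply intervalIntegral.integral_mono_on hk1
    · apply ContinuousOn.intervalIntegrable
      apply ContinuousOn.mul continuousOn_const
      apply ContinuousOn.inv₀ continuousOn_id
      intro s hs
      rw [uIcc_of_le hk1] at hs
      exact ne_of_gt (lt_of_lt_of_le hk hs.1)
    · exact hi2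
    · intro s hs
      have hs0 : 0 < s := lt_of_lt_of_le hk hs.1
      have hd0 : 0 < k*(1-s)+s := lowInfo_den_pos hk hk1 hs0.le
      have hd : k*(1-s)+s ≤ 2*s := by nlinarith [hs.1, hs.2]
      have hdn : (k*(1-s)+s)^n ≤ (2*s)^n := pow_le_pow_left₀ hd0.le hd _
      have e1 : (2^n : ℝ)⁻¹ * s⁻¹ = s^(n-1) / (2*s)^n := by
        rw [mul_pow]
        rw [show s^n = s^(n-1) * s by
          rw [← pow_succ]
          congr 1
          omega]
        field_simp
      rw [e1]
      exact div_le_div_of_nonneg_left (pow_nonneg hs0.le _) (pow_pos hd0 _) hdn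
  have h3 : (∫ s in k..(1:ℝ), (2^n)⁻¹ * s⁻¹) = -Real.log k / 2^n := by
    rw [intervalIntegral.integral_const_mul,
      integral_inv (by rw [uIcc_of_le hk1]; exact fun h => hk.not_ge h.1),
      one_div, Real.log_inv]
    ring
  rw [hsplit]
  linarith


lemma lowInfoSubst (n : ℕ) {k : ℝ} (hk1 : k < 1) :
    (∫ t in k..(1:ℝ), (t-k)^(n-1)/t^n) = (1-k)^(n-1) * ((1-k) * lowInfoJ n k) := by
  have hc : (1-k) ≠ 0 := ne_of_gt (by linarith)
  have h := intervalIntegral.integral_comp_mul_add (f := fun t : ℝ => (t-k)^(n-1)/t^n)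
    (a := 0) (b := 1) (c := 1-k) hc k
  simp only [smul_eq_mul] at h
  rw [show (1-k)*0+k = k by ring, show (1-k)*1+k = 1 by ring] at h
  have h2 : (∫ x in (0:ℝ)..1, ((1-k)*x + k - k)^(n-1)/((1-k)*x+k)^n)
      = (1-k)^(n-1) * lowInfoJ n k := by
    rw [lowInfoJ, ← intervalIntegral.integral_const_mul]
    apply intervalIntegral.integral_congr
    intro x _
    dsimp only
    rw [show (1-k)*x + k - k = (1-k)*x by ring, mul_pow,
      show (1-k)*x+k = k*(1-x)+x by ring, mul_div_assoc]
  rw [h2] at h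
  field_simp at h
  rw [← h]
  ring

lemma lowInfo_equation_iff (n : ℕ) (lam : ℝ) {k : ℝ} (hk : k ∈ Ioo (0:ℝ) 1) :
    (lam * ∫ t in k..(1:ℝ), (t - k) ^ (n - 1) / t ^ n = (1 - k) ^ (n - 1))
      ↔ lam * ((1-k) * lowInfoJ n k) = 1 := by
  have hp : (0:ℝ) < (1-k)^(n-1) := pow_pos (by linarith [hk.2]) _
  rw [lowInfoSubst n hk.2]
  constructor
  · intro h
    apply mul_left_cancel₀ hp.ne'
    calc (1-k)^(n-1) * (lam * ((1-k) * lowInfoJ n k)) = lam * ((1-k)^(n-1) * ((1-k) * lowInfoJ n k)) := by ring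
    _ = (1-k)^(n-1) := h
    _ = (1-k)^(n-1) * 1 := (mul_one _).symm
  · intro h
    calc lam * ((1-k)^(n-1) * ((1-k) * lowInfoJ n k)) = (1-k)^(n-1) * (lam * ((1-k) * lowInfoJ n k)) := by ring
    _ = (1-k)^(n-1) := by rw [h, mul_one]


/-- Let `n ≥ 1` be an integer and `λ ∈ (0,1]`. Then there is a unique `k ∈ (0,1)` with
`λ·∫_k^1 (t−k)^{n−1}/t^n dt = (1−k)^{n−1}`. -/
theorem existsUnique_low_information_threshold
    (n : ℕ) (hn : 1 ≤ n) (lam : ℝ) (hlam : lam ∈ Set.Ioc (0 : ℝ) 1) :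
    ∃! k : ℝ, k ∈ Set.Ioo (0 : ℝ) 1 ∧
      lam * ∫ t in k..1, (t - k) ^ (n - 1) / t ^ n = (1 - k) ^ (n - 1) := by
  obtain ⟨hlam0, hlam1⟩ := hlam
  set H : ℝ → ℝ := fun k => lam * ((1-k) * lowInfoJ n k) with hHdef
  -- strict antitonicity
  have hanti : StrictAntiOn H (Ioo (0:ℝ) 1) := by
    intro k1 hk1 k2 hk2 h12
    have hJ2 : 0 < lowInfoJ n k2 := lowInfoJ_pos n (hk1.1.trans h12) hk2.2.le
    have hJ : lowInfoJ n k2 < lowInfoJ n k1 := lowInfoJ_anti n (by omega) hk1.1 h12 hk2.2.le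
    have hk2' := hk2.2
    simp only [hHdef]
    have : (1-k2) * lowInfoJ n k2 < (1-k1) * lowInfoJ n k1 := by nlinarith
    nlinarith
  -- endpoints
  set a0 : ℝ := Real.exp (-(2^(n+2))/lam) with ha0def
  set b0 : ℝ := 1 - (1/2)^(n+1) with hb0def
  have ha0pos' : 0 < a0 := Real.exp_pos _
  have hloga0 : -Real.log a0 = 2^(n+2)/lam := by
    rw [ha0def, Real.log_exp]; ring
  have hexp0 : a0 ≤ Real.exp (-1) → a0 ≤ Real.exp (-1) := id
  clear_value a0
  have hb0def' : b0 = 1 - (1/2)^(n+1) := hb0def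
  clear_value b0
  have h2n : (0:ℝ) < 2^n := by positivity
  have ha0pos : 0 < a0 := ha0pos'
  have h2n2 : (4:ℝ) ≤ 2^(n+2) := by
    calc (4:ℝ) = 2^2 := by norm_num
    _ ≤ 2^(n+2) := pow_le_pow_right₀ one_le_two (by omega)
  have hexp : -(2^(n+2) : ℝ)/lam ≤ -1 := by
    rw [div_le_iff₀ hlam0]
    nlinarith
  have ha0half : a0 ≤ 1/2 := by
    have h1 : a0 ≤ Real.exp (-1) := by rw [ha0def]; exact Real.exp_le_exp.mpr hexp
    have h2 : Real.exp (-1) ≤ 1/2 := by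
      have h3 : (2:ℝ) ≤ Real.exp 1 := by nlinarith [Real.exp_one_gt_d9]
      have h4 : (0:ℝ) < Real.exp 1 := Real.exp_pos 1
      rw [Real.exp_neg]
      have h5 : (Real.exp 1)⁻¹ * Real.exp 1 = 1 := inv_mul_cancel₀ h4.ne'
      nlinarith [inv_nonneg.mpr h4.le]
    linarith
  have hb0half : (1:ℝ)/2 ≤ b0 := by
    have : ((1:ℝ)/2)^(n+1) ≤ (1/2)^2 := by
      apply pow_le_pow_of_le_one (by norm_num) (by norm_num)
      omega
    simp only [hb0def]
    norm_num at this ⊢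
    linarith
  have hb0lt : b0 < 1 := by
    have : (0:ℝ) < (1/2)^(n+1) := by positivity
    simp only [hb0def]; linarith
  have ha0b0 : a0 ≤ b0 := by linarith
  have hHa0 : 1 < H a0 := by
    have hJge := lowInfoJ_ge n hn ha0pos (by linarith)
    rw [hloga0] at hJge
    have h4 : (2:ℝ)^(n+2) = 4 * 2^n := by ring
    have key : 2 ≤ H a0 := by
      simp only [hHdef]
      have hJ' : 4/lam ≤ lowInfoJ n a0 := by
        rw [h4] at hJge
        rw [div_div] at hJge
        calc (4:ℝ)/lam = 4 * 2^n / (lam * 2^n) := by field_simp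
        _ ≤ lowInfoJ n a0 := hJge
      have h1a : (1:ℝ)/2 ≤ 1 - a0 := by linarith
      have hJpos : 0 < lowInfoJ n a0 := lowInfoJ_pos n ha0pos (by linarith)
      calc (2:ℝ) = lam * ((1/2) * (4/lam)) := by field_simp; ring
      _ ≤ lam * ((1-a0) * lowInfoJ n a0) := by
        apply mul_le_mul_of_nonneg_left _ hlam0.le
        apply mul_le_mul h1a hJ' (by positivity) (by linarith)
    linarith
  have hHb0 : H b0 < 1 := by
    have hb0pos : 0 < b0 := by linarith
    have hJle := lowInfoJ_le n hb0pos hb0lt.le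
    have hJpos : 0 < lowInfoJ n b0 := lowInfoJ_pos n hb0pos hb0lt.le
    have hbn : (1:ℝ) - b0 < b0^n := by
      have h1 : ((1:ℝ)/2)^n ≤ b0^n := pow_le_pow_left₀ (by norm_num) hb0half _
      have h2 : (1:ℝ) - b0 = (1/2)^(n+1) := by simp [hb0def]
      have h3 : ((1:ℝ)/2)^(n+1) < (1/2)^n := by
        apply pow_lt_pow_right_of_lt_one₀ (by norm_num) (by norm_num)
        omega
      linarith
    have hbnpos : (0:ℝ) < b0^n := by positivity
    calc H b0 = lam * ((1-b0) * lowInfoJ n b0) := rfl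
    _ ≤ 1 * ((1-b0) * lowInfoJ n b0) := by
      apply mul_le_mul_of_nonneg_right hlam1
      have : 0 < 1 - b0 := by linarith
      positivity
    _ = (1-b0) * lowInfoJ n b0 := by ring
    _ ≤ (1-b0) * (1/b0^n) := by
      apply mul_le_mul_of_nonneg_left hJle (by linarith)
    _ < 1 := by
      rw [mul_one_div, div_lt_one hbnpos]
      exact hbn
  -- continuity
  have hHcont : ContinuousOn H (Icc a0 b0) := by
    intro k hk
    have hk0 : 0 < k := lt_of_lt_of_le ha0pos hk.1
    exact ((continuousAt_const.mul ((continuousAt_const.sub continuousAt_id).mul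
      (lowInfoJ_contAt n hk0))) : ContinuousAt H k).continuousWithinAt
  -- IVT
  have hIVT := intermediate_value_Icc' ha0b0 hHcont
  have h1mem : (1:ℝ) ∈ Icc (H b0) (H a0) := ⟨hHb0.le, hHa0.le⟩
  obtain ⟨k, hkIcc, hHk⟩ := hIVT h1mem
  have hkIoo : k ∈ Ioo (0:ℝ) 1 := ⟨lt_of_lt_of_le ha0pos hkIcc.1, lt_of_le_of_lt hkIcc.2 hb0lt⟩
  refine ⟨k, ⟨hkIoo, (lowInfo_equation_iff n lam hkIoo).mpr hHk⟩, ?_⟩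
  rintro y ⟨hyIoo, hyeq⟩
  have hHy : H y = 1 := (lowInfo_equation_iff n lam hyIoo).mp hyeq
  exact hanti.injOn hyIoo hkIoo (by rw [hHy, hHk])
end

section
/- Let n ≥ 2 be an integer and λ ∈ (0,1] a real number. Then there exists a unique k ∈ (0,1) such that ∫_k^1 [ (t−k)^{n−1}/t^n − (1−λ)·(t−k)^n/t^{n+1} ] dt = (1−k)^n. -/
open MeasureTheory Set

noncomputable def hiF (n : ℕ) (s : ℝ) : ℝ := (1 - s) ^ n / s

lemma hiF_contOn {n : ℕ} {s : Set ℝ} (hs : ∀ x ∈ s, (0:ℝ) < x) :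
    ContinuousOn (hiF n) s := by
  exact ContinuousOn.div (by fun_prop) continuousOn_id (fun x hx => (hs x hx).ne')

lemma hiF_intble {n : ℕ} {a b : ℝ} (ha : 0 < a) (hb : 0 < b) :
    IntervalIntegrable (hiF n) volume a b := by
  apply (hiF_contOn ?_).intervalIntegrable
  intro x hx
  exact lt_of_lt_of_le (lt_min ha hb) hx.1

noncomputable def hiG (n : ℕ) (k : ℝ) : ℝ := ∫ s in k..1, hiF n s

lemma hiG_hasDeriv {n : ℕ} {k : ℝ} (hk : 0 < k) :
    HasDerivAt (hiG n) (-hiF n k) k := by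
  apply intervalIntegral.integral_hasDerivAt_left (hiF_intble hk one_pos)
  · exact (hiF_contOn (fun x hx => hx)).stronglyMeasurableAtFilter isOpen_Ioi k hk
  · exact ((hiF_contOn (fun x (hx : x ∈ Ioi (0:ℝ)) => hx)).continuousAt
      (Ioi_mem_nhds hk))

lemma hi_subst {n : ℕ} {k : ℝ} (hk : 0 < k) (hk1 : k ≤ 1) :
    (∫ t in k..1, (t - k) ^ n / t ^ (n+1)) = hiG n k := by
  have huIcc : uIcc k 1 = Icc k 1 := uIcc_of_le hk1
  have hpos : ∀ x ∈ uIcc k 1, (0:ℝ) < x := by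
    intro x hx; rw [huIcc] at hx; exact lt_of_lt_of_le hk hx.1
  have hder : ∀ x ∈ uIcc k 1, HasDerivAt (fun t => k / t) (-(k / x^2)) x := by
    intro x hx
    have hx0 : x ≠ 0 := (hpos x hx).ne'
    have h := (hasDerivAt_inv hx0).const_mul k
    simp only [div_eq_mul_inv]
    refine h.congr_deriv ?_
    ring
  have hcont' : ContinuousOn (fun x => -(k / x^2)) (uIcc k 1) := by
    apply ContinuousOn.neg
    exact ContinuousOn.div continuousOn_const (by fun_prop)
      (fun x hx => pow_ne_zero _ (hpos x hx).ne')
  have himg : ContinuousOn (hiF n) ((fun t => k / t) '' uIcc k 1) := by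
    apply hiF_contOn
    rintro x ⟨t, ht, rfl⟩
    exact div_pos hk (hpos t ht)
  have hsub := intervalIntegral.integral_comp_smul_deriv' hder hcont' himg
  have hkk : k / k = 1 := div_self hk.ne'
  have hk1' : k / 1 = k := div_one k
  rw [hkk, hk1'] at hsub
  have hLHS : (∫ x in k..1, (-(k / x^2)) • ((hiF n) ∘ (fun t => k / t)) x)
      = -∫ t in k..1, (t - k) ^ n / t ^ (n+1) := by
    rw [← intervalIntegral.integral_neg]
    apply intervalIntegral.integral_congr
    intro x hx
    have hx0 : (0:ℝ) < x := hpos x hx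
    simp only [Function.comp, hiF, smul_eq_mul]
    have h1 : 1 - k / x = (x - k) / x := by field_simp
    rw [h1, div_pow]
    field_simp
    ring
  rw [hLHS] at hsub
  have : -∫ t in k..1, (t - k) ^ n / t ^ (n+1) = - hiG n k := by
    rw [hsub, hiG]
    rw [intervalIntegral.integral_symm]
  linarith [this]

lemma hi_split {n : ℕ} (hn : 1 ≤ n) {lam k : ℝ} (hk : 0 < k) (hk1 : k ≤ 1) :
    (∫ t in k..1, ((t - k) ^ (n - 1) / t ^ n - (1 - lam) * (t - k) ^ n / t ^ (n + 1)))
      = (1 - k)^n / n + lam * ∫ t in k..1, (t - k) ^ n / t ^ (n+1) := by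
  obtain ⟨m, rfl⟩ : ∃ m, n = m + 1 := ⟨n - 1, by omega⟩
  have hexp : m + 1 - 1 = m := rfl
  have huIcc : uIcc k 1 = Icc k 1 := uIcc_of_le hk1
  have hpos : ∀ x ∈ uIcc k 1, (0:ℝ) < x := by
    intro x hx; rw [huIcc] at hx; exact lt_of_lt_of_le hk hx.1
  set D : ℝ → ℝ := fun t => (t - k)^m / t^(m+1) - (t - k)^(m+1) / t^(m+2) with hD
  set φ : ℝ → ℝ := fun t => (t - k)^(m+1) / ((m+1 : ℝ) * t^(m+1)) with hφ
  have hder : ∀ t ∈ uIcc k 1, HasDerivAt φ (D t) t := by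
    intro t ht
    have ht0 : (0:ℝ) < t := hpos t ht
    have hu : HasDerivAt (fun t : ℝ => (t - k)^(m+1))
        (((m:ℝ)+1) * (t - k)^m * (1 - 0)) t :=
      (((hasDerivAt_id t).sub (hasDerivAt_const t k)).pow (m+1)).congr_deriv (by simp only [Pi.sub_apply, id_eq]; push_cast; ring)
    have hv : HasDerivAt (fun t : ℝ => (m+1 : ℝ) * t^(m+1))
        ((m+1 : ℝ) * (((m:ℝ)+1) * t^m)) t := by
      simpa using ((hasDerivAt_pow (m+1) t).const_mul ((m:ℝ)+1))
    have hvne : (m+1 : ℝ) * t^(m+1) ≠ 0 := by positivity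
    have := hu.div hv hvne
    refine this.congr_deriv ?_
    rw [hD]
    field_simp
    ring
  have hqc : ContinuousOn (fun t => (t - k)^(m+1) / t^(m+2)) (uIcc k 1) :=
    ContinuousOn.div (by fun_prop) (by fun_prop)
      (fun x hx => pow_ne_zero _ (hpos x hx).ne')
  have hDc : ContinuousOn D (uIcc k 1) := by
    rw [hD]
    apply ContinuousOn.sub
    · exact ContinuousOn.div (by fun_prop) (by fun_prop)
        (fun x hx => pow_ne_zero _ (hpos x hx).ne')
    · exact hqc
  have hDi : IntervalIntegrable D volume k 1 := hDc.intervalIntegrable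
  have hqi : IntervalIntegrable (fun t => lam * ((t - k)^(m+1) / t^(m+2))) volume k 1 :=
    (hqc.const_smul lam).intervalIntegrable
  have hsplit : (fun t : ℝ => (t - k) ^ (m + 1 - 1) / t ^ (m+1)
        - (1 - lam) * (t - k) ^ (m+1) / t ^ (m + 1 + 1))
      = fun t => D t + lam * ((t - k)^(m+1) / t^(m+2)) := by
    funext t
    rw [hexp, hD]
    ring
  rw [hsplit, intervalIntegral.integral_add hDi hqi,
    intervalIntegral.integral_eq_sub_of_hasDerivAt hder hDi,
    intervalIntegral.integral_const_mul]
  have : φ 1 = (1 - k)^(m+1) / ((m:ℝ)+1+0) ∧ φ k = 0 := by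
    constructor
    · rw [hφ]; norm_num
    · rw [hφ]; simp
  rw [this.1, this.2]
  push_cast
  ring

/-- Let `n ≥ 2` be an integer and `λ ∈ (0,1]`. Then there is a unique `k ∈ (0,1)` with
`∫_k^1 [(t−k)^{n−1}/t^n − (1−λ)(t−k)^n/t^{n+1}] dt = (1−k)^n`. -/
theorem existsUnique_high_information_threshold
    (n : ℕ) (hn : 2 ≤ n) (lam : ℝ) (hlam : lam ∈ Set.Ioc (0 : ℝ) 1) :
    ∃! k : ℝ, k ∈ Set.Ioo (0 : ℝ) 1 ∧
      (∫ t in k..1, ((t - k) ^ (n - 1) / t ^ n - (1 - lam) * (t - k) ^ n / t ^ (n + 1))) =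
        (1 - k) ^ n := by
  obtain ⟨hl0, hl1⟩ := hlam
  obtain ⟨m, rfl⟩ : ∃ m, n = m + 2 := ⟨n - 2, by omega⟩
  set n := m + 2 with hndef
  have hn0 : (n:ℝ) ≠ 0 := by positivity
  set H : ℝ → ℝ := fun k => lam * hiG n k - ((n:ℝ)-1)/n * (1-k)^n with hHdef
  -- equivalence between original equation and H = 0
  have key : ∀ k ∈ Ioo (0:ℝ) 1,
      ((∫ t in k..1, ((t - k) ^ (n - 1) / t ^ n - (1 - lam) * (t - k) ^ n / t ^ (n + 1)))
        = (1 - k)^n ↔ H k = 0) := by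
    intro k hk
    rw [hi_split (by omega) hk.1 hk.2.le, hi_subst hk.1 hk.2.le]
    have hsum : ((n:ℝ)-1)/n * (1-k)^n = (1-k)^n - (1-k)^n / n := by
      field_simp
    simp only [hHdef, hsum]
    constructor <;> intro h <;> linarith
  -- derivative of H
  set Hd : ℝ → ℝ := fun x => (1-x)^(m+1) / x * ((((m:ℝ)+1) * x - lam * (1-x))) with hHdw
  have hHder : ∀ x : ℝ, 0 < x → HasDerivAt H (Hd x) x := by
    intro x hx
    have h1 := (hiG_hasDeriv (n := n) hx).const_mul lam
    have h2 : HasDerivAt (fun k : ℝ => (1-k)^n) ((n:ℝ) * (1-x)^(n-1) * (0-1)) x :=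
      ((hasDerivAt_const x 1).sub (hasDerivAt_id x)).pow n
    have h3 := h1.sub (h2.const_mul (((n:ℝ)-1)/n))
    refine h3.congr_deriv ?_
    rw [hHdw, hiF]
    have : n - 1 = m + 1 := rfl
    rw [this]
    push_cast
    field_simp
    rw [hndef]
    push_cast
    ring
  have hHcont : ∀ x : ℝ, 0 < x → ContinuousAt H x := fun x hx => (hHder x hx).continuousAt
  -- threshold kstar
  set kstar : ℝ := lam / (((m:ℝ)+1) + lam) with hksdef
  have hden : (0:ℝ) < ((m:ℝ)+1) + lam := by positivity
  have hks0 : 0 < kstar := div_pos hl0 hden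
  have hks1 : kstar < 1 := (div_lt_one hden).2 (by push_cast; linarith)
  -- sign of the derivative
  have hd_neg : ∀ x : ℝ, 0 < x → x < kstar → Hd x < 0 := by
    intro x hx hxk
    have hx1 : x < 1 := lt_trans hxk hks1
    have h1 : x * (((m:ℝ)+1) + lam) < lam := (lt_div_iff₀ hden).1 hxk
    have h2 : ((m:ℝ)+1) * x - lam * (1-x) < 0 := by nlinarith
    have h3 : (0:ℝ) < (1-x)^(m+1) / x := div_pos (pow_pos (by linarith) _) hx
    rw [hHdw]
    exact mul_neg_of_pos_of_neg h3 h2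
  have hd_pos : ∀ x : ℝ, kstar < x → x < 1 → 0 < Hd x := by
    intro x hxk hx1
    have hx : 0 < x := lt_trans hks0 hxk
    have h1 : lam < x * (((m:ℝ)+1) + lam) := (div_lt_iff₀ hden).1 hxk
    have h2 : 0 < ((m:ℝ)+1) * x - lam * (1-x) := by nlinarith
    have h3 : (0:ℝ) < (1-x)^(m+1) / x := div_pos (pow_pos (by linarith) _) hx
    rw [hHdw]
    exact mul_pos h3 h2
  -- monotonicity
  have hanti : StrictAntiOn H (Ioc 0 kstar) := by
    apply strictAntiOn_of_deriv_neg (convex_Ioc _ _)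
    · exact fun x hx => (hHcont x hx.1).continuousWithinAt
    · rw [interior_Ioc]
      intro x hx
      rw [(hHder x hx.1).deriv]
      exact hd_neg x hx.1 hx.2
  have hmono : StrictMonoOn H (Icc kstar 1) := by
    apply strictMonoOn_of_deriv_pos (convex_Icc _ _)
    · exact fun x hx => (hHcont x (lt_of_lt_of_le hks0 hx.1)).continuousWithinAt
    · rw [interior_Icc]
      intro x hx
      rw [(hHder x (lt_trans hks0 hx.1)).deriv]
      exact hd_pos x hx.1 hx.2
  -- values
  have hH1 : H 1 = 0 := by
    rw [hHdef]
    simp [hiG]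
  have hHks : H kstar < 0 := by
    have := hmono ⟨le_refl _, hks1.le⟩ ⟨hks1.le, le_refl _⟩ hks1
    rwa [hH1] at this
  -- choice of small eps with H eps > 0
  set eps : ℝ := min (Real.exp (-(2^n/lam + 1))) (kstar/2) with hepsdef
  have heps0 : 0 < eps := lt_min (Real.exp_pos _) (by positivity)
  have hepsks : eps < kstar := lt_of_le_of_lt (min_le_right _ _) (by linarith)
  have hepsexp : eps ≤ Real.exp (-(2^n/lam + 1)) := min_le_left _ _
  have hchalf : (1:ℝ) ≤ 2^n/lam + 1 := by
    have : (0:ℝ) ≤ 2^n/lam := by positivity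
    linarith
  have hepshalf : eps ≤ 1/2 := by
    have h2e : (2:ℝ) < Real.exp 1 := lt_trans (by norm_num) Real.exp_one_gt_d9
    have : Real.exp (-(2^n/lam + 1)) ≤ Real.exp (-1) := Real.exp_le_exp.2 (by linarith)
    have hinv : Real.exp (-1) ≤ 1/2 := by
      rw [Real.exp_neg]
      have := inv_anti₀ (by norm_num : (0:ℝ) < 2) h2e.le
      norm_num at this ⊢
      linarith
    linarith
  have hGbound : (1/2:ℝ)^n * (Real.log (1/2) - Real.log eps) ≤ hiG n eps := by
    have hsplit2 : hiG n eps = (∫ s in eps..(1/2:ℝ), hiF n s) + ∫ s in (1/2:ℝ)..1, hiF n s :=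
      (intervalIntegral.integral_add_adjacent_intervals (hiF_intble heps0 (by norm_num))
        (hiF_intble (by norm_num) one_pos)).symm
    have hsecond : 0 ≤ ∫ s in (1/2:ℝ)..1, hiF n s := by
      apply intervalIntegral.integral_nonneg (by norm_num)
      intro u hu
      exact div_nonneg (pow_nonneg (by linarith [hu.2]) _) (by linarith [hu.1])
    have hcmp : IntervalIntegrable (fun s : ℝ => (1/2:ℝ)^n * (1/s)) volume eps (1/2) := by
      apply ContinuousOn.intervalIntegrable
      apply ContinuousOn.mul continuousOn_const
      apply ContinuousOn.div continuousOn_const continuousOn_id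
      intro x hx
      have : min eps (1/2:ℝ) ≤ x := hx.1
      have heh : 0 < min eps (1/2:ℝ) := lt_min heps0 (by norm_num)
      exact (lt_of_lt_of_le heh hx.1).ne'
    have hfirst : (∫ s in eps..(1/2:ℝ), (1/2:ℝ)^n * (1/s)) ≤ ∫ s in eps..(1/2:ℝ), hiF n s := by
      apply intervalIntegral.integral_mono_on hepshalf hcmp (hiF_intble heps0 (by norm_num))
      intro s hs
      have hs0 : 0 < s := lt_of_lt_of_le heps0 hs.1
      rw [hiF, mul_one_div]
      gcongr
      linarith [hs.2]
    have hlogint : (∫ s in eps..(1/2:ℝ), 1/s) = Real.log (1/2) - Real.log eps := by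
      open intervalIntegral in
      rw [integral_one_div (by
        rw [uIcc_of_le hepshalf]
        intro h0
        exact absurd h0.1 (not_le.2 heps0)), Real.log_div (by norm_num) heps0.ne']
    calc (1/2:ℝ)^n * (Real.log (1/2) - Real.log eps)
        = ∫ s in eps..(1/2:ℝ), (1/2:ℝ)^n * (1/s) := by
          rw [intervalIntegral.integral_const_mul, hlogint]
      _ ≤ ∫ s in eps..(1/2:ℝ), hiF n s := hfirst
      _ ≤ hiG n eps := by rw [hsplit2]; linarith
  have hHeps : 0 < H eps := by
    have hlogeps : Real.log eps ≤ -(2^n/lam + 1) := by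
      calc Real.log eps ≤ Real.log (Real.exp (-(2^n/lam + 1))) :=
            Real.log_le_log heps0 hepsexp
        _ = -(2^n/lam + 1) := Real.log_exp _
    have hlog2 : Real.log (1/2) = -Real.log 2 := by
      rw [one_div, Real.log_inv]
    have hlog2lt : Real.log 2 < 1 := by
      have := Real.log_two_lt_d9
      linarith
    have hbig : 2^n/lam ≤ Real.log (1/2) - Real.log eps := by
      rw [hlog2]; linarith
    have hpp : (0:ℝ) < (1/2:ℝ)^n := by positivity
    have hone : (1/2:ℝ)^n * 2^n = 1 := by
      rw [← mul_pow]
      norm_num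
    have hA : (1/2:ℝ)^n * (2^n/lam) = 1/lam := by
      rw [← mul_div_assoc, hone]
    have hB : (1/2:ℝ)^n * (2^n/lam) ≤ (1/2:ℝ)^n * (Real.log (1/2) - Real.log eps) :=
      mul_le_mul_of_nonneg_left hbig hpp.le
    have hC : 1/lam ≤ hiG n eps := by
      rw [← hA]
      linarith
    have hge1 : 1 ≤ lam * hiG n eps := by
      have := mul_le_mul_of_nonneg_left hC hl0.le
      rwa [mul_one_div, div_self hl0.ne'] at this
    have hsmall : ((n:ℝ)-1)/n * (1-eps)^n < 1 := by
      have h1 : (1-eps)^n ≤ 1 := pow_le_one₀ (by linarith) (by linarith)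
      have h2 : ((n:ℝ)-1)/n < 1 := by
        rw [div_lt_one (by positivity)]
        linarith
      have h3 : (0:ℝ) ≤ ((n:ℝ)-1)/n := by
        apply div_nonneg _ (by positivity)
        push_cast
        have h2n : (2:ℝ) ≤ n := by exact_mod_cast hn
        linarith
      calc ((n:ℝ)-1)/n * (1-eps)^n ≤ ((n:ℝ)-1)/n * 1 := by
            exact mul_le_mul_of_nonneg_left h1 h3
        _ < 1 := by linarith
    rw [hHdef]
    simp only
    linarith
  -- existence by IVT
  have hIVT := intermediate_value_Icc' hepsks.le
    (fun x hx => (hHcont x (lt_of_lt_of_le heps0 hx.1)).continuousWithinAt)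
  obtain ⟨k, hkmem, hk0⟩ := hIVT ⟨hHks.le, hHeps.le⟩
  have hkIoo : k ∈ Ioo (0:ℝ) 1 :=
    ⟨lt_of_lt_of_le heps0 hkmem.1, lt_of_le_of_lt hkmem.2 hks1⟩
  -- any root is < kstar, and uniqueness by strict antitonicity
  have hroot_lt : ∀ y ∈ Ioo (0:ℝ) 1, H y = 0 → y ∈ Ioc (0:ℝ) kstar := by
    intro y hy hy0
    refine ⟨hy.1, ?_⟩
    by_contra hcon
    push_neg at hcon
    have := hmono ⟨hcon.le, hy.2.le⟩ ⟨hks1.le, le_refl _⟩ hy.2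
    rw [hH1, hy0] at this
    exact absurd this (by norm_num)
  refine ⟨k, ⟨hkIoo, (key k hkIoo).2 hk0⟩, ?_⟩
  rintro y ⟨hy, hyeq⟩
  have hy0 : H y = 0 := (key y hy).1 hyeq
  exact hanti.injOn (hroot_lt y hy hy0) (hroot_lt k hkIoo hk0) (by rw [hy0, hk0])
end

section
/- Let n ≥ 2 be an integer and k ∈ (0,1). Then (1−k)^{−(n−1)} > 1 + (n−1)k, and ∫_k^1 (t−k)^{n−1}/t^n dt < (1 − (1−k)^n) / ( (1−k)^{−(n−1)} − (1 + (n−1)k) ). -/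
open MeasureTheory

/-- Let `n ≥ 2` be an integer and `k ∈ (0,1)`. Then `(1−k)^{−(n−1)} > 1 + (n−1)k`, and
`∫_k^1 (t−k)^{n−1}/t^n dt < (1 − (1−k)^n) / ((1−k)^{−(n−1)} − (1 + (n−1)k))`. -/
theorem integral_lt_of_maximin_ratio_regime
    (n : ℕ) (hn : 2 ≤ n) (k : ℝ) (hk : k ∈ Set.Ioo (0 : ℝ) 1) :
    ((1 - k) ^ (n - 1))⁻¹ > 1 + ((n : ℝ) - 1) * k ∧
      (∫ t in k..1, (t - k) ^ (n - 1) / t ^ n) <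
        (1 - (1 - k) ^ n) / (((1 - k) ^ (n - 1))⁻¹ - (1 + ((n : ℝ) - 1) * k)) := by
  obtain ⟨hk0, hk1⟩ := hk
  obtain ⟨m, rfl⟩ : ∃ m, n = m + 1 := ⟨n - 1, by omega⟩
  have hm : 1 ≤ m := by omega
  have hm1 : (1:ℝ) ≤ (m:ℝ) := by exact_mod_cast hm
  have hb0 : (0:ℝ) < 1 - k := by linarith
  have hb1 : (1:ℝ) - k < 1 := by linarith
  simp only [Nat.add_sub_cancel, Nat.cast_add, Nat.cast_one, add_sub_cancel_right]
  have hpart1 : 1 + (m:ℝ) * k < ((1 - k) ^ m)⁻¹ := by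
    have he : 1 + k / (1 - k) = (1 - k)⁻¹ := by field_simp; ring
    have hx : (1:ℝ) + m * (k / (1 - k)) ≤ (1 + k / (1 - k)) ^ m :=
      one_add_mul_le_pow (by nlinarith [div_pos hk0 hb0]) m
    have h2 : (1 + k / (1 - k)) ^ m = ((1 - k) ^ m)⁻¹ := by rw [he, inv_pow]
    rw [h2] at hx
    have h3 : (m:ℝ) * k < (m:ℝ) * (k / (1 - k)) := by
      apply mul_lt_mul_of_pos_left _ (by linarith)
      rw [lt_div_iff₀ hb0]; nlinarith
    linarith
  refine ⟨hpart1, ?_⟩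
  have hD : (0:ℝ) < ((1 - k) ^ m)⁻¹ - (1 + (m:ℝ) * k) := sub_pos.mpr hpart1
  have huIcc : Set.uIcc k 1 = Set.Icc k 1 := Set.uIcc_of_le hk1.le
  have hcf : ContinuousOn (fun t : ℝ => (t - k) ^ m / t ^ (m + 1)) (Set.uIcc k 1) := by
    rw [huIcc]
    apply ContinuousOn.div (by fun_prop) (by fun_prop)
    intro t ht
    exact pow_ne_zero _ (ne_of_gt (lt_of_lt_of_le hk0 ht.1))
  have hcg : ContinuousOn (fun t : ℝ => (t - k) ^ m / t ^ (m + 2)) (Set.uIcc k 1) := by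
    rw [huIcc]
    apply ContinuousOn.div (by fun_prop) (by fun_prop)
    intro t ht
    exact pow_ne_zero _ (ne_of_gt (lt_of_lt_of_le hk0 ht.1))
  have hif : IntervalIntegrable (fun t : ℝ => (t - k) ^ m / t ^ (m + 1)) volume k 1 :=
    hcf.intervalIntegrable
  have hig : IntervalIntegrable (fun t : ℝ => (t - k) ^ m / t ^ (m + 2)) volume k 1 :=
    hcg.intervalIntegrable
  have hmono : (∫ t in k..1, (t - k) ^ m / t ^ (m + 1))
      ≤ ∫ t in k..1, (t - k) ^ m / t ^ (m + 2) := by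
    apply intervalIntegral.integral_mono_on hk1.le hif hig
    intro t ht
    have ht0 : (0:ℝ) < t := lt_of_lt_of_le hk0 ht.1
    have hnum : (0:ℝ) ≤ (t - k) ^ m := pow_nonneg (by linarith [ht.1]) m
    have hden : t ^ (m + 2) ≤ t ^ (m + 1) := pow_le_pow_of_le_one ht0.le ht.2 (by omega)
    exact div_le_div_of_nonneg_left hnum (by positivity) hden
  have hFTC : (∫ t in k..1, (t - k) ^ m / t ^ (m + 2))
      = (1 - k) ^ (m + 1) / (((m:ℝ) + 1) * k) := by
    have hderiv : ∀ t ∈ Set.uIcc k 1,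
        HasDerivAt (fun t : ℝ => (1 - k * t⁻¹) ^ (m + 1) / (((m:ℝ) + 1) * k))
          ((t - k) ^ m / t ^ (m + 2)) t := by
      intro t ht
      rw [huIcc] at ht
      have ht0 : (0:ℝ) < t := lt_of_lt_of_le hk0 ht.1
      have h1 : HasDerivAt (fun t : ℝ => 1 - k * t⁻¹) (k / t ^ 2) t := by
        have h := ((hasDerivAt_inv (ne_of_gt ht0)).const_mul k).const_sub 1
        refine h.congr_deriv ?_
        field_simp
      have h2 := (h1.pow (m + 1)).div_const (((m:ℝ) + 1) * k)
      refine h2.congr_deriv ?_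
      symm
      simp only [Nat.add_sub_cancel]
      have htk : 1 - k * t⁻¹ = (t - k) / t := by field_simp
      rw [htk, div_pow]
      rw [div_eq_div_iff (by positivity) (by positivity)]
      push_cast
      field_simp
      ring
    rw [intervalIntegral.integral_eq_sub_of_hasDerivAt hderiv hig]
    have hkk : k * k⁻¹ = 1 := mul_inv_cancel₀ (ne_of_gt hk0)
    rw [hkk]
    norm_num
  have hfinal : (1 - k) ^ (m + 1) / (((m:ℝ) + 1) * k)
      < (1 - (1 - k) ^ (m + 1)) / (((1 - k) ^ m)⁻¹ - (1 + (m:ℝ) * k)) := by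
    rw [div_lt_div_iff₀ (by positivity) hD]
    have hinv : (1 - k) ^ (m + 1) * ((1 - k) ^ m)⁻¹ = 1 - k := by
      rw [pow_succ]
      field_simp
    have hB : 1 - ((m:ℝ) + 1) * k ≤ (1 - k) ^ (m + 1) := by
      have h := one_add_mul_le_pow (show (-2:ℝ) ≤ 1 - k - 1 by linarith) (m + 1)
      have e : (1:ℝ) + (1 - k - 1) = 1 - k := by ring
      rw [e] at h
      push_cast at h
      linarith
    have hBlt : (1 - k) ^ (m + 1) < 1 := pow_lt_one₀ hb0.le hb1 (by omega)
    nlinarith [hB, hBlt, mul_lt_mul_of_pos_left hBlt hk0, hinv,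
      mul_pos hk0 (pow_pos hb0 (m + 1))]
  calc (∫ t in k..1, (t - k) ^ m / t ^ (m + 1))
      ≤ ∫ t in k..1, (t - k) ^ m / t ^ (m + 2) := hmono
    _ = (1 - k) ^ (m + 1) / (((m:ℝ) + 1) * k) := hFTC
    _ < _ := hfinal
end

section
/- Let n ≥ 1 be an integer and define I(k) = ∫_k^1 (t−k)^{n−1}/t^n dt for k ∈ (0,1). Then I is differentiable on (0,1) with I'(k) = −(1−k)^{n−1}/k, and moreover I(k) = Σ_{i=n}^∞ (1−k)^i / i for every k ∈ (0,1). -/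
open MeasureTheory

lemma aux_series (m : ℕ) {x : ℝ} (hx0 : 0 < x) (hx1 : x < 1) :
    (∫ u in (0:ℝ)..x, u ^ m / (1 - u)) = ∑' i : ℕ, x ^ (i + (m + 1)) / ((i : ℝ) + (m + 1)) := by
  have hle : (0:ℝ) ≤ x := hx0.le
  set μ := volume.restrict (Set.Ioc (0:ℝ) x) with hμ
  have hFi : ∀ i : ℕ, Integrable (fun u : ℝ => u ^ (i + m)) μ :=
    fun i => (continuous_pow _).integrableOn_Ioc
  have hInt : ∀ i : ℕ, (∫ u, u ^ (i + m) ∂μ) = x ^ (i + (m + 1)) / ((i : ℝ) + (m + 1)) := by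
    intro i
    have h1 : (∫ u, u ^ (i + m) ∂μ) = ∫ u in (0:ℝ)..x, u ^ (i + m) := by
      rw [intervalIntegral.integral_of_le hle]
    rw [h1, integral_pow]
    have : i + m + 1 = i + (m + 1) := by omega
    rw [this]
    push_cast
    ring_nf
  have hnorm : Summable fun i : ℕ => ∫ u, ‖(fun u : ℝ => u ^ (i + m)) u‖ ∂μ := by
    have heq : ∀ i : ℕ, (∫ u, ‖(fun u : ℝ => u ^ (i + m)) u‖ ∂μ)
        = x ^ (i + (m + 1)) / ((i : ℝ) + (m + 1)) := by
      intro i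
      rw [← hInt i]
      refine setIntegral_congr_fun measurableSet_Ioc fun u hu => ?_
      simp only [Real.norm_eq_abs, abs_pow]
      rw [abs_of_nonneg hu.1.le]
    simp only [heq]
    apply Summable.of_nonneg_of_le (fun i => by positivity)
      (fun i => ?_) (summable_geometric_of_lt_one hle hx1)
    have h1 : x ^ (i + (m + 1)) ≤ x ^ i := by
      apply pow_le_pow_of_le_one hle hx1.le; omega
    have h2 : (1:ℝ) ≤ (i : ℝ) + (m + 1) := by
      have := Nat.cast_nonneg (α := ℝ) i
      have := Nat.cast_nonneg (α := ℝ) m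
      linarith
    exact le_trans (div_le_self (pow_nonneg hle _) h2) h1
  have hsum := (hasSum_integral_of_summable_integral_norm hFi hnorm).tsum_eq
  have htsum : (∫ u, (∑' i : ℕ, u ^ (i + m)) ∂μ) = ∫ u, u ^ m / (1 - u) ∂μ := by
    refine setIntegral_congr_fun measurableSet_Ioc fun u hu => ?_
    have hu0 : (0:ℝ) ≤ u := hu.1.le
    have hu1 : u < 1 := lt_of_le_of_lt hu.2 hx1
    have : ∀ i : ℕ, u ^ (i + m) = u ^ m * u ^ i := fun i => by rw [pow_add, mul_comm]
    simp only [this]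
    rw [tsum_mul_left, tsum_geometric_of_lt_one hu0 hu1, div_eq_mul_inv]
  rw [intervalIntegral.integral_of_le hle]
  rw [show (∫ u in Set.Ioc (0:ℝ) x, u ^ m / (1 - u)) = ∫ u, u ^ m / (1 - u) ∂μ from rfl,
    ← htsum, ← hsum]
  exact tsum_congr fun i => hInt i

/-- Let `n ≥ 1` and `I(k) = ∫_k^1 (t−k)^{n−1}/t^n dt` for `k ∈ (0,1)`. Then `I` is
differentiable on `(0,1)` with `I'(k) = −(1−k)^{n−1}/k`, and moreover
`I(k) = Σ_{i=n}^∞ (1−k)^i / i` for every `k ∈ (0,1)`. -/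
theorem hasDerivAt_and_tsum_integral_sub_pow_div
    (n : ℕ) (hn : 1 ≤ n) :
    ∀ k ∈ Set.Ioo (0 : ℝ) 1,
      HasDerivAt (fun k' : ℝ => ∫ t in k'..1, (t - k') ^ (n - 1) / t ^ n)
          (-(1 - k) ^ (n - 1) / k) k ∧
        (∫ t in k..1, (t - k) ^ (n - 1) / t ^ n) =
          ∑' i : ℕ, (1 - k) ^ (i + n) / ((i : ℝ) + n) := by
  obtain ⟨m, rfl⟩ : ∃ m, n = m + 1 := ⟨n - 1, by omega⟩
  simp only [Nat.add_sub_cancel]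
  -- Change of variables : for every k ∈ (0,1),
  -- ∫ t in k..1, (t-k)^m/t^(m+1) = ∫ u in 0..(1-k), u^m/(1-u)
  have key : ∀ k ∈ Set.Ioo (0:ℝ) 1,
      (∫ t in k..1, (t - k) ^ m / t ^ (m + 1)) = ∫ u in (0:ℝ)..(1 - k), u ^ m / (1 - u) := by
    intro k ⟨hk0, hk1⟩
    have h1k : 0 < 1 - k := by linarith
    have huIcc : Set.uIcc (0:ℝ) (1 - k) = Set.Icc 0 (1 - k) := Set.uIcc_of_le h1k.le
    set f : ℝ → ℝ := fun u => k / (1 - u) with hf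
    set f' : ℝ → ℝ := fun u => k / (1 - u) ^ 2 with hf'
    set g : ℝ → ℝ := fun t => (t - k) ^ m / t ^ (m + 1) with hg
    have hmem : ∀ u ∈ Set.uIcc (0:ℝ) (1 - k), k ≤ 1 - u ∧ 1 - u ≤ 1 := by
      intro u hu
      rw [huIcc] at hu
      constructor <;> [linarith [hu.2]; linarith [hu.1]]
    have hderiv : ∀ u ∈ Set.uIcc (0:ℝ) (1 - k), HasDerivAt f (f' u) u := by
      intro u hu
      have h1u : 1 - u ≠ 0 := (lt_of_lt_of_le hk0 (hmem u hu).1).ne'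
      have : HasDerivAt (fun u : ℝ => 1 - u) (-1) u := by
        exact (hasDerivAt_id' u).const_sub 1
      have := (this.inv h1u).const_mul k
      convert this using 1
      · rfl
      · rfl
      · funext y; simp only [hf, Pi.inv_apply, div_eq_mul_inv]
      simp only [hf']
      rw [neg_neg]
      field_simp
    have hcont' : ContinuousOn f' (Set.uIcc (0:ℝ) (1 - k)) := by
      apply ContinuousOn.div continuousOn_const (by fun_prop)
      intro v hv
      have h := lt_of_lt_of_le hk0 (hmem v hv).1
      positivity
    have himg : f '' Set.uIcc (0:ℝ) (1 - k) ⊆ Set.Ioi 0 := by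
      rintro t ⟨u, hu, rfl⟩
      have h := lt_of_lt_of_le hk0 (hmem u hu).1
      exact div_pos hk0 h
    have hgcont : ContinuousOn g (f '' Set.uIcc (0:ℝ) (1 - k)) := by
      apply ContinuousOn.mono _ himg
      apply ContinuousOn.div (by fun_prop) (by fun_prop)
      intro t ht
      have h : (0:ℝ) < t := ht
      positivity
    have hsub := intervalIntegral.integral_comp_smul_deriv' hderiv hcont' hgcont
    have hf0 : f 0 = k := by simp [hf]
    have hf1 : f (1 - k) = 1 := by
      simp only [hf, sub_sub_cancel]
      exact div_self hk0.ne'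
    rw [hf0, hf1] at hsub
    rw [← hsub]
    refine intervalIntegral.integral_congr fun u hu => ?_
    obtain ⟨hk1u, _⟩ := hmem u hu
    have h1u : 0 < 1 - u := lt_of_lt_of_le hk0 hk1u
    simp only [smul_eq_mul, Function.comp_apply, hf, hf', hg]
    have hfu : k / (1 - u) - k = k * u / (1 - u) := by field_simp; ring
    rw [hfu]
    have hk' : k ≠ 0 := hk0.ne'
    have h1u' : (1 : ℝ) - u ≠ 0 := h1u.ne'
    rw [div_pow, div_pow, mul_pow]
    field_simp
    ring
  intro k hk
  obtain ⟨hk0, hk1⟩ := hk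
  have h1k0 : 0 < 1 - k := by linarith
  have h1k1 : 1 - k < 1 := by linarith
  constructor
  · -- derivative part
    set g : ℝ → ℝ := fun u => u ^ m / (1 - u) with hg
    have hgmeas : StronglyMeasurableAtFilter g (nhds (1 - k)) :=
      ((measurable_id.pow_const m).div
        (measurable_const.sub measurable_id)).stronglyMeasurable.stronglyMeasurableAtFilter
    have hgcontAt : ContinuousAt g (1 - k) := by
      apply ContinuousAt.div (by fun_prop) (by fun_prop)
      simp only [sub_sub_cancel]
      exact hk0.ne'
    have hgint : IntervalIntegrable g volume 0 (1 - k) := by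
      apply ContinuousOn.intervalIntegrable
      apply ContinuousOn.div (by fun_prop) (by fun_prop)
      intro u hu
      rw [Set.uIcc_of_le h1k0.le] at hu
      have h : 0 < 1 - u := by linarith [hu.2, hk1]
      positivity
    have hG := intervalIntegral.integral_hasDerivAt_right hgint hgmeas hgcontAt
    have hinner : HasDerivAt (fun k' : ℝ => 1 - k') (-1) k := by
      exact (hasDerivAt_id' k).const_sub 1
    have hcomp := hG.comp k hinner
    have heq : (fun k' : ℝ => ∫ t in k'..1, (t - k') ^ m / t ^ (m + 1))
        =ᶠ[nhds k] (fun k' : ℝ => ∫ u in (0:ℝ)..(1 - k'), g u) := by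
      filter_upwards [Ioo_mem_nhds hk0 hk1] with k' hk'
      exact key k' hk'
    refine (HasDerivAt.congr_of_eventuallyEq ?_ heq)
    convert hcomp using 1
    · rfl
    · rfl
    simp only [hg, sub_sub_cancel]
    field_simp
  · rw [key k ⟨hk0, hk1⟩, aux_series m h1k0 h1k1]
    exact tsum_congr fun i => by norm_num
end

section
/- Let n ≥ 1 be an integer, let λ > 0 and r > 0 be real numbers, and define g(v) = λ·(v/(v−r))^{n−1}·∫_r^v (t−r)^{n−1}/t^n dt for v > r. Then: (i) g satisfies the differential equation g'(v) + ((n−1)·r/(v·(v−r)))·g(v) = λ/v for all v > r; (ii) g(v) = λ·Σ_{k=n}^∞ (1/k)·((v−r)/v)^{k−n+1} for all v > r; (iii) g is strictly increasing on (r,∞); (iv) g(v) tends to 0 as v tends to r from above. -/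
open MeasureTheory Filter

private noncomputable def spaPhi (m : ℕ) (r : ℝ) : ℝ → ℝ := fun v =>
  Real.log v - Real.log r - ∑ i ∈ Finset.range m, ((v - r) / v) ^ (i + 1) / (i + 1)

private lemma spaPhi_deriv (m : ℕ) (r : ℝ) (hr : 0 < r) (t : ℝ) (ht : 0 < t) :
    HasDerivAt (spaPhi m r) ((t - r) ^ m / t ^ (m + 1)) t := by
  have ht0 : t ≠ 0 := ne_of_gt ht
  have hu : HasDerivAt (fun v : ℝ => (v - r) / v) ((1 * t - (t - r) * 1) / t ^ 2) t :=
    (((hasDerivAt_id t).sub_const r).div (hasDerivAt_id t) ht0)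
  have hsum : HasDerivAt (fun v : ℝ => ∑ i ∈ Finset.range m, ((v - r) / v) ^ (i + 1) / (i + 1))
      (∑ i ∈ Finset.range m,
        ((i + 1 : ℕ) * ((t - r) / t) ^ i * ((1 * t - (t - r) * 1) / t ^ 2)) / (i + 1)) t := by
    refine HasDerivAt.fun_sum fun i _ => ?_
    have := (hu.pow (i + 1)).div_const ((i : ℝ) + 1)
    simpa [Nat.add_sub_cancel] using this
  have hlog : HasDerivAt (fun v => Real.log v - Real.log r) t⁻¹ t :=
    (Real.hasDerivAt_log ht0).sub_const _
  have := hlog.sub hsum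
  refine this.congr_deriv (Eq.symm ?_)
  have hone : (t - r) / t ≠ 1 := by
    intro h; rw [div_eq_iff ht0] at h; nlinarith
  have hterm : ∀ i ∈ Finset.range m,
      ((i + 1 : ℕ) * ((t - r) / t) ^ i * ((1 * t - (t - r) * 1) / t ^ 2)) / (i + 1)
        = ((t - r) / t) ^ i * (r / t ^ 2) := by
    intro i _
    have : ((i : ℝ) + 1) ≠ 0 := by positivity
    push_cast
    field_simp
    ring
  rw [Finset.sum_congr rfl hterm, ← Finset.sum_mul, geom_sum_eq hone]
  have h1u : (t - r) / t - 1 = -(r / t) := by field_simp; ring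
  rw [h1u, div_pow]
  field_simp
  ring

private lemma spaPhi_integral (m : ℕ) (r : ℝ) (hr : 0 < r) (v : ℝ) (hv : r < v) :
    (∫ t in r..v, (t - r) ^ m / t ^ (m + 1)) = spaPhi m r v := by
  have hrv : r ≤ v := le_of_lt hv
  have hIcc : Set.uIcc r v = Set.Icc r v := Set.uIcc_of_le hrv
  have hcont : ContinuousOn (fun t : ℝ => (t - r) ^ m / t ^ (m + 1)) (Set.uIcc r v) := by
    apply ContinuousOn.div
    · fun_prop
    · fun_prop
    · intro t ht
      rw [hIcc] at ht
      exact pow_ne_zero _ (ne_of_gt (lt_of_lt_of_le hr ht.1))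
  have := intervalIntegral.integral_eq_sub_of_hasDerivAt
    (f := spaPhi m r) (f' := fun t => (t - r) ^ m / t ^ (m + 1))
    (fun t ht => by
      rw [hIcc] at ht
      exact spaPhi_deriv m r hr t (lt_of_lt_of_le hr ht.1))
    (hcont.intervalIntegrable)
  rw [this]
  have : spaPhi m r r = 0 := by
    simp [spaPhi]
  rw [this, sub_zero]

private lemma spaPhi_hasSum (m : ℕ) (r : ℝ) (hr : 0 < r) (v : ℝ) (hv : r < v) :
    HasSum (fun k : ℕ => ((v - r) / v) ^ (k + m + 1) / (k + m + 1))
      (spaPhi m r v) := by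
  have hv0 : (0 : ℝ) < v := lt_trans hr hv
  have hv0' : v ≠ 0 := ne_of_gt hv0
  set u : ℝ := (v - r) / v with hu
  have hu0 : 0 < u := div_pos (by linarith) hv0
  have hu1 : u < 1 := by
    rw [hu, div_lt_one hv0]; linarith
  have habs : |u| < 1 := abs_lt.2 ⟨by linarith, hu1⟩
  have hlog := Real.hasSum_pow_div_log_of_abs_lt_one habs
  have h1u : 1 - u = r / v := by rw [hu]; field_simp; ring
  have hlogval : -Real.log (1 - u) = Real.log v - Real.log r := by
    rw [h1u, Real.log_div (ne_of_gt hr) hv0']; ring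
  rw [hlogval] at hlog
  have := (hasSum_nat_add_iff' (f := fun n : ℕ => u ^ (n + 1) / (n + 1)) m).2 hlog
  have hfun : (fun k : ℕ => u ^ (k + m + 1) / (k + m + 1)) = fun n : ℕ => u ^ (n + m + 1) / (↑(n + m) + 1) := by
    funext k; push_cast; rfl
  rw [hfun]; exact this

/-- Let `n ≥ 1`, `λ > 0`, `r > 0`, and `g(v) = λ·(v/(v−r))^{n−1}·∫_r^v (t−r)^{n−1}/t^n dt`
for `v > r`. Then (i) `g'(v) + ((n−1)r/(v(v−r)))·g(v) = λ/v` for all `v > r`;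
(ii) `g(v) = λ·Σ_{k=n}^∞ (1/k)·((v−r)/v)^{k−n+1}` for all `v > r`;
(iii) `g` is strictly increasing on `(r,∞)`; (iv) `g(v) → 0` as `v → r⁺`. -/
theorem optimal_spa_reserve_distribution_properties
    (n : ℕ) (hn : 1 ≤ n) (lam r : ℝ) (hlam : 0 < lam) (hr : 0 < r)
    (g : ℝ → ℝ)
    (hg : ∀ v, r < v →
      g v = lam * (v / (v - r)) ^ (n - 1) * ∫ t in r..v, (t - r) ^ (n - 1) / t ^ n) :
    (∀ v, r < v →
        HasDerivAt g (lam / v - ((n : ℝ) - 1) * r / (v * (v - r)) * g v) v) ∧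
      (∀ v, r < v →
        g v = lam * ∑' k : ℕ, (1 / ((k : ℝ) + n)) * ((v - r) / v) ^ (k + 1)) ∧
      StrictMonoOn g (Set.Ioi r) ∧
      Filter.Tendsto g (nhdsWithin r (Set.Ioi r)) (nhds 0) := by
  obtain ⟨m, rfl⟩ : ∃ m, n = m + 1 := ⟨n - 1, (Nat.succ_pred_eq_of_pos hn).symm⟩
  simp only [Nat.add_sub_cancel] at hg ⊢
  -- g in terms of spaPhi
  have hgphi : ∀ v, r < v → g v = lam * ((v / (v - r)) ^ m * spaPhi m r v) := by
    intro v hv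
    rw [hg v hv, spaPhi_integral m r hr v hv, mul_assoc]
  -- the HasSum for g's series
  have hgsum : ∀ v, r < v →
      HasSum (fun k : ℕ => (1 / ((k : ℝ) + (m + 1))) * ((v - r) / v) ^ (k + 1))
        ((v / (v - r)) ^ m * spaPhi m r v) := by
    intro v hv
    have hv0 : (0 : ℝ) < v := lt_trans hr hv
    have hvr : (0 : ℝ) < v - r := by linarith
    have hcu : (v / (v - r)) ^ m * ((v - r) / v) ^ m = 1 := by
      rw [← mul_pow, div_mul_div_comm, mul_comm v (v - r),
        div_self (by positivity), one_pow]
    have := (spaPhi_hasSum m r hr v hv).mul_left ((v / (v - r)) ^ m)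
    have hfun : (fun k : ℕ => (1 / ((k : ℝ) + (m + 1))) * ((v - r) / v) ^ (k + 1)) = fun k : ℕ => (v / (v - r)) ^ m * (((v - r) / v) ^ (k + m + 1) / (k + m + 1)) := by
      funext k
      have hpow : ((v - r) / v) ^ (k + m + 1) = ((v - r) / v) ^ (k + 1) * ((v - r) / v) ^ m := by
        rw [← pow_add]; ring_nf
      rw [hpow]
      push_cast
      rw [mul_div_assoc', ← mul_assoc, mul_comm ((v / (v - r)) ^ m), mul_assoc, hcu]
      ring
    rw [hfun]; exact this
  have hser : ∀ v, r < v →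
      g v = lam * ∑' k : ℕ, (1 / ((k : ℝ) + (m + 1))) * ((v - r) / v) ^ (k + 1) := by
    intro v hv
    rw [hgphi v hv, ((hgsum v hv).tsum_eq)]
  refine ⟨?_, ?_, ?_, ?_⟩
  · -- (i) derivative
    intro v hv
    have hv0 : (0 : ℝ) < v := lt_trans hr hv
    have hv0' : v ≠ 0 := ne_of_gt hv0
    have hvr : (0 : ℝ) < v - r := by linarith
    have hvr' : v - r ≠ 0 := ne_of_gt hvr
    have hw : HasDerivAt (fun v : ℝ => v / (v - r))
        ((1 * (v - r) - v * 1) / (v - r) ^ 2) v :=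
      (hasDerivAt_id v).div ((hasDerivAt_id v).sub_const r) hvr'
    have hphi := spaPhi_deriv m r hr v hv0
    have hG : HasDerivAt (fun v : ℝ => lam * ((v / (v - r)) ^ m * spaPhi m r v))
        (lam * ((↑m * (v / (v - r)) ^ (m - 1) * ((1 * (v - r) - v * 1) / (v - r) ^ 2))
            * spaPhi m r v + (v / (v - r)) ^ m * ((v - r) ^ m / v ^ (m + 1)))) v :=
      ((hw.pow m).mul hphi).const_mul lam
    have hev : g =ᶠ[nhds v] fun v : ℝ => lam * ((v / (v - r)) ^ m * spaPhi m r v) := by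
      filter_upwards [isOpen_Ioi.mem_nhds hv] with x hx
      exact hgphi x hx
    have hG' := hG.congr_of_eventuallyEq hev
    refine hG'.congr_deriv (Eq.symm ?_)
    rw [hgphi v hv]
    push_cast
    cases m with
    | zero => simp; field_simp
    | succ j =>
      simp only [Nat.add_sub_cancel]
      set p := spaPhi (j + 1) r v
      push_cast
      rw [div_pow, div_pow]
      field_simp
      ring
  · -- (ii) series
    intro v hv
    rw [hser v hv]
    push_cast
    rfl
  · -- (iii) strict mono
    intro v1 hv1 v2 hv2 hlt
    simp only [Set.mem_Ioi] at hv1 hv2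
    have hv10 : (0 : ℝ) < v1 := lt_trans hr hv1
    have hv20 : (0 : ℝ) < v2 := lt_trans hr hv2
    have hu1pos : 0 < (v1 - r) / v1 := div_pos (by linarith) hv10
    have huu : (v1 - r) / v1 < (v2 - r) / v2 := by
      rw [div_lt_div_iff₀ hv10 hv20]; nlinarith
    have hu2lt : (v2 - r) / v2 < 1 := by rw [div_lt_one hv20]; linarith
    rw [hser v1 hv1, hser v2 hv2]
    refine mul_lt_mul_of_pos_left ?_ hlam
    refine Summable.tsum_lt_tsum_of_nonneg (i := 0) ?_ ?_ ?_ ((hgsum v2 hv2).summable)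
    · intro k
      have : (0:ℝ) < (k : ℝ) + (m + 1) := by positivity
      positivity
    · intro k
      have hk : (0:ℝ) < (k : ℝ) + (m + 1) := by positivity
      refine mul_le_mul_of_nonneg_left ?_ (by positivity)
      exact pow_le_pow_left₀ (le_of_lt hu1pos) (le_of_lt huu) _
    · have hk : (0:ℝ) < (0 : ℝ) + ((m : ℝ) + 1) := by positivity
      simp only [Nat.cast_zero, pow_one, zero_add]
      refine mul_lt_mul_of_pos_left ?_ (by positivity)
      exact huu
  · -- (iv) limit
    have hbound : ∀ v, r < v → g v ≤ lam * ((v - r) / r) := by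
      intro v hv
      have hv0 : (0 : ℝ) < v := lt_trans hr hv
      set u : ℝ := (v - r) / v with hu
      have hu0 : 0 < u := div_pos (by linarith) hv0
      have hu1 : u < 1 := by rw [hu, div_lt_one hv0]; linarith
      have hgeo : HasSum (fun k : ℕ => u ^ (k + 1)) (u * (1 - u)⁻¹) := by
        have := (hasSum_geometric_of_lt_one (le_of_lt hu0) hu1).mul_left u
        have hfun : (fun k : ℕ => u ^ (k + 1)) = fun k : ℕ => u * u ^ k := by
          funext k
          rw [pow_succ']
        rw [hfun]; exact this
      have hle : (∑' k : ℕ, (1 / ((k : ℝ) + (m + 1))) * u ^ (k + 1)) ≤ u * (1 - u)⁻¹ := by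
        rw [← hgeo.tsum_eq]
        refine Summable.tsum_le_tsum ?_ ((hgsum v hv).summable) hgeo.summable
        intro k
        have hk1 : (1:ℝ) ≤ (k : ℝ) + (m + 1) := by
          have : (0:ℝ) ≤ (k:ℝ) := Nat.cast_nonneg k
          have : (0:ℝ) ≤ (m:ℝ) := Nat.cast_nonneg m
          linarith
        calc (1 / ((k : ℝ) + (m + 1))) * u ^ (k + 1)
            ≤ 1 * u ^ (k + 1) := by
              refine mul_le_mul_of_nonneg_right ?_ (by positivity)
              rw [div_le_one (by positivity)]; exact hk1
          _ = u ^ (k + 1) := one_mul _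
      have huval : u * (1 - u)⁻¹ = (v - r) / r := by
        rw [hu]
        have : (1 : ℝ) - (v - r) / v = r / v := by field_simp; ring
        rw [this]
        field_simp
      rw [hser v hv]
      calc lam * ∑' k : ℕ, (1 / ((k : ℝ) + (m + 1))) * u ^ (k + 1)
          ≤ lam * (u * (1 - u)⁻¹) := mul_le_mul_of_nonneg_left hle (le_of_lt hlam)
        _ = lam * ((v - r) / r) := by rw [huval]
    have hnonneg : ∀ v, r < v → 0 ≤ g v := by
      intro v hv
      rw [hser v hv]
      have hv0 : (0 : ℝ) < v := lt_trans hr hv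
      have hu0 : (0:ℝ) ≤ (v - r) / v := le_of_lt (div_pos (by linarith) hv0)
      refine mul_nonneg (le_of_lt hlam) (tsum_nonneg ?_)
      intro k
      have : (0:ℝ) < (k : ℝ) + (m + 1) := by positivity
      positivity
    refine squeeze_zero' (g := fun v => lam * ((v - r) / r)) ?_ ?_ ?_
    · filter_upwards [self_mem_nhdsWithin] with v hv
      exact hnonneg v hv
    · filter_upwards [self_mem_nhdsWithin] with v hv
      exact hbound v hv
    · have hcont : Continuous (fun v : ℝ => lam * ((v - r) / r)) := by fun_prop
      have := (hcont.tendsto r).mono_left (nhdsWithin_le_nhds (s := Set.Ioi r))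
      simpa using this
end

section
/- Let n ≥ 2 be an integer, let λ > 0 and φ₀ < a be real numbers, and define Ψ(v) = (n·λ/(n−1))·((v−φ₀)/(v−a))^n·∫_a^v (t−a)^n/(t−φ₀)^{n+1} dt for v > a. Then: (i) Ψ satisfies the differential equation Ψ'(v) + (n·(a−φ₀)/((v−φ₀)·(v−a)))·Ψ(v) = n·λ/((n−1)·(v−φ₀)) for all v > a; (ii) Ψ(v) = (n·λ/(n−1))·Σ_{k=n+1}^∞ (v−a)^{k−n}/(k·(v−φ₀)^{k−n}) for all v > a; (iii) Ψ is strictly increasing on (a,∞); (iv) Ψ(v) tends to 0 as v tends to a from above. -/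
open MeasureTheory Filter


private lemma aux_ratio_deriv (c d t : ℝ) (ht : t ≠ d) :
    HasDerivAt (fun s => (s - c)/(s - d)) ((c - d)/(t - d)^2) t := by
  have h1 : HasDerivAt (fun s : ℝ => s - c) 1 t := (hasDerivAt_id t).sub_const c
  have h2 : HasDerivAt (fun s : ℝ => s - d) 1 t := (hasDerivAt_id t).sub_const d
  have h := h1.div h2 (sub_ne_zero.mpr ht)
  have e : (1 * (t - d) - (t - c) * 1) / (t - d)^2 = (c - d)/(t - d)^2 := by ring
  rwa [e] at h

private lemma aux_geom (n : ℕ) (N : ℕ) (x s : ℝ) (hs : s ≠ 0) :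
    x^n/s^(n+1) - ∑ k ∈ Finset.range N, x^(n+k)*(s - x)/s^(n+k+2)
      = (x/s)^N * (x^n/s^(n+1)) := by
  induction N with
  | zero => simp
  | succ N ih =>
    rw [Finset.sum_range_succ, ← sub_sub, ih]
    rw [div_pow, div_pow]
    field_simp
    ring

private lemma aux_pow_deriv (c d t : ℝ) (ht : t ≠ d) (m : ℕ) :
    HasDerivAt (fun s => ((s - c)/(s - d))^(m+1) / ((m:ℝ)+1))
      ((t-c)^m * (c - d) / (t - d)^(m+2)) t := by
  have h := ((aux_ratio_deriv c d t ht).pow (m+1)).div_const ((m:ℝ)+1)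
  simp only [Nat.add_sub_cancel] at h
  have hs : t - d ≠ 0 := sub_ne_zero.mpr ht
  have hm : ((m:ℝ)+1) ≠ 0 := by positivity
  refine h.congr_deriv ?_
  push_cast
  rw [div_pow]
  field_simp
  ring

private lemma cont_div' (φ₀ a v : ℝ) (hφa : φ₀ < a) (hav : a ≤ v) (F G : ℝ → ℝ)
    (hF : Continuous F) (hG : Continuous G) (hG0 : ∀ t, φ₀ < t → G t ≠ 0) :
    IntervalIntegrable (fun t => F t / G t) MeasureTheory.volume a v := by
  apply ContinuousOn.intervalIntegrable
  apply hF.continuousOn.div hG.continuousOn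
  intro t ht
  rw [Set.uIcc_of_le hav] at ht
  exact hG0 t (lt_of_lt_of_le hφa ht.1)

private lemma integral_term (φ₀ a v : ℝ) (hφa : φ₀ < a) (hav : a < v) (m : ℕ) :
    ∫ t in a..v, (t-a)^m * (a - φ₀) / (t - φ₀)^(m+2)
      = ((v-a)/(v-φ₀))^(m+1) / ((m:ℝ)+1) := by
  have key := intervalIntegral.integral_eq_sub_of_hasDerivAt
    (f := fun s => ((s - a)/(s - φ₀))^(m+1) / ((m:ℝ)+1))
    (f' := fun t => (t-a)^m * (a - φ₀) / (t - φ₀)^(m+2)) (a := a) (b := v)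
    (fun t ht => by
      rw [Set.uIcc_of_le hav.le] at ht
      exact aux_pow_deriv a φ₀ t (by have := ht.1; intro h; rw [h] at this; linarith) m)
    (cont_div' φ₀ a v hφa hav.le _ _ (by continuity) (by continuity)
      (fun t ht => pow_ne_zero _ (sub_ne_zero.mpr (ne_of_gt ht))))
  rw [key]
  simp [sub_self, zero_pow (Nat.succ_ne_zero m)]
private lemma summable_aux (n j : ℕ) (r : ℝ) (h0 : 0 ≤ r) (h1 : r < 1) :
    Summable (fun k : ℕ => r^(k+j+1)/((k:ℝ)+n+1)) := by
  apply Summable.of_nonneg_of_le (fun k => by positivity) (fun k => ?_)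
    (summable_geometric_of_lt_one h0 h1)
  calc r^(k+j+1)/((k:ℝ)+n+1) ≤ r^(k+j+1) := by
        apply div_le_self (by positivity)
        have h1 : (0:ℝ) ≤ (k:ℝ) := Nat.cast_nonneg k
        have h2 : (0:ℝ) ≤ (n:ℝ) := Nat.cast_nonneg n
        linarith
    _ ≤ r^k := pow_le_pow_of_le_one h0 h1.le (by omega)

private lemma ratio_le (φ₀ a t v : ℝ) (hφa : φ₀ < a) (ht : a ≤ t) (htv : t ≤ v) :
    (t-a)/(t-φ₀) ≤ (v-a)/(v-φ₀) := by
  rw [div_le_div_iff₀ (by linarith) (by linarith)]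
  nlinarith

private lemma ratio_lt (φ₀ a u v : ℝ) (hφa : φ₀ < a) (hu : a < u) (huv : u < v) :
    (u-a)/(u-φ₀) < (v-a)/(v-φ₀) := by
  rw [div_lt_div_iff₀ (by linarith) (by linarith)]
  nlinarith

private lemma integral_eq_tsum (n : ℕ) (φ₀ a v : ℝ) (hφa : φ₀ < a) (hav : a < v) :
    (∫ t in a..v, (t-a)^n/(t-φ₀)^(n+1))
      = ∑' k : ℕ, ((v-a)/(v-φ₀))^(k+n+1) / ((k:ℝ)+n+1) := by
  set r : ℝ := (v-a)/(v-φ₀) with hr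
  have hvφ : (0:ℝ) < v - φ₀ := by linarith
  have hva : (0:ℝ) ≤ v - a := by linarith
  have hr0 : 0 ≤ r := by positivity
  have hr1 : r < 1 := by rw [hr, div_lt_one hvφ]; linarith
  have hf : IntervalIntegrable (fun t => (t-a)^n/(t-φ₀)^(n+1)) volume a v :=
    cont_div' φ₀ a v hφa hav.le _ _ (by continuity) (by continuity)
      (fun t ht => pow_ne_zero _ (sub_ne_zero.mpr (ne_of_gt ht)))
  have htail : ∀ N : ℕ, IntervalIntegrable
      (fun t => ((t-a)/(t-φ₀))^N * ((t-a)^n/(t-φ₀)^(n+1))) volume a v := by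
    intro N
    have he : (fun t => ((t-a)/(t-φ₀))^N * ((t-a)^n/(t-φ₀)^(n+1)))
        = fun t => ((t-a)^N * (t-a)^n) / ((t-φ₀)^N * (t-φ₀)^(n+1)) := by
      funext t; rw [div_pow, div_mul_div_comm]
    rw [he]
    exact cont_div' φ₀ a v hφa hav.le _ _ (by continuity) (by continuity)
      (fun t ht => mul_ne_zero (pow_ne_zero _ (sub_ne_zero.mpr (ne_of_gt ht)))
        (pow_ne_zero _ (sub_ne_zero.mpr (ne_of_gt ht))))
  have hu : ∀ k : ℕ, IntervalIntegrable
      (fun t => (t-a)^(n+k)*(a-φ₀)/(t-φ₀)^(n+k+2)) volume a v := fun k =>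
    cont_div' φ₀ a v hφa hav.le _ _ (by continuity) (by continuity)
      (fun t ht => pow_ne_zero _ (sub_ne_zero.mpr (ne_of_gt ht)))
  have hpart : ∀ N : ℕ,
      (∫ t in a..v, (t-a)^n/(t-φ₀)^(n+1))
        - ∑ k ∈ Finset.range N, r^(k+n+1)/((k:ℝ)+n+1)
      = ∫ t in a..v, ((t-a)/(t-φ₀))^N * ((t-a)^n/(t-φ₀)^(n+1)) := by
    intro N
    have hsum : ∑ k ∈ Finset.range N, r^(k+n+1)/((k:ℝ)+n+1)
        = ∫ t in a..v, ∑ k ∈ Finset.range N, (t-a)^(n+k)*(a-φ₀)/(t-φ₀)^(n+k+2) := by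
      rw [intervalIntegral.integral_finset_sum (fun k _ => hu k)]
      refine Finset.sum_congr rfl (fun k _ => ?_)
      rw [integral_term φ₀ a v hφa hav (n+k)]
      rw [show n+k+1 = k+n+1 from by omega]
      rw [hr]
      push_cast
      ring_nf
    have hS : IntervalIntegrable
        (fun t => ∑ k ∈ Finset.range N, (t-a)^(n+k)*(a-φ₀)/(t-φ₀)^(n+k+2)) volume a v := by
      have h := IntervalIntegrable.sum (μ := volume) (Finset.range N) (fun k _ => hu k)
      have e : (fun t => ∑ k ∈ Finset.range N, (t-a)^(n+k)*(a-φ₀)/(t-φ₀)^(n+k+2))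
          = ∑ k ∈ Finset.range N, fun t => (t-a)^(n+k)*(a-φ₀)/(t-φ₀)^(n+k+2) := by
        funext t
        simp
      rw [e]; exact h
    rw [hsum, ← intervalIntegral.integral_sub hf hS]
    apply intervalIntegral.integral_congr
    intro t ht
    rw [Set.uIcc_of_le hav.le] at ht
    have hs : t - φ₀ ≠ 0 := ne_of_gt (by linarith [ht.1])
    have := aux_geom n N (t-a) (t-φ₀) hs
    simpa [show (t-φ₀)-(t-a) = a-φ₀ from by ring] using this
  have htail0 : Tendsto (fun N => ∫ t in a..v,
      ((t-a)/(t-φ₀))^N * ((t-a)^n/(t-φ₀)^(n+1))) atTop (nhds 0) := by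
    have hlim : Tendsto (fun N : ℕ => r^N * ∫ t in a..v, (t-a)^n/(t-φ₀)^(n+1))
        atTop (nhds 0) := by
      simpa using (tendsto_pow_atTop_nhds_zero_of_lt_one hr0 hr1).mul_const
        (∫ t in a..v, (t-a)^n/(t-φ₀)^(n+1))
    apply squeeze_zero (fun N => ?_) (fun N => ?_) hlim
    · apply intervalIntegral.integral_nonneg hav.le
      intro t ht
      have h1 : 0 ≤ t - a := by linarith [ht.1]
      have h2 : 0 < t - φ₀ := by linarith [ht.1]
      positivity
    · rw [← intervalIntegral.integral_const_mul]
      apply intervalIntegral.integral_mono_on hav.le (htail N) (hf.const_mul _)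
      intro t ht
      have h1 : 0 ≤ t - a := by linarith [ht.1]
      have h2 : 0 < t - φ₀ := by linarith [ht.1]
      apply mul_le_mul_of_nonneg_right
      · exact pow_le_pow_left₀ (by positivity) (ratio_le φ₀ a t v hφa ht.1 ht.2) N
      · positivity
  have h2 : Tendsto (fun N => ∑ k ∈ Finset.range N, r^(k+n+1)/((k:ℝ)+n+1)) atTop
      (nhds (∫ t in a..v, (t-a)^n/(t-φ₀)^(n+1))) := by
    have : (fun N => ∑ k ∈ Finset.range N, r^(k+n+1)/((k:ℝ)+n+1))
        = fun N => (∫ t in a..v, (t-a)^n/(t-φ₀)^(n+1))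
          - ∫ t in a..v, ((t-a)/(t-φ₀))^N * ((t-a)^n/(t-φ₀)^(n+1)) := by
      funext N; linarith [hpart N]
    rw [this]
    simpa using tendsto_const_nhds.sub htail0
  have h1 := (summable_aux n n r hr0 hr1).hasSum.tendsto_sum_nat
  exact tendsto_nhds_unique h2 h1
/-- Let `n ≥ 2`, `λ > 0`, `φ₀ < a`, and
`Ψ(v) = (nλ/(n−1))·((v−φ₀)/(v−a))^n·∫_a^v (t−a)^n/(t−φ₀)^{n+1} dt` for `v > a`. Then
(i) `Ψ'(v) + (n(a−φ₀)/((v−φ₀)(v−a)))·Ψ(v) = nλ/((n−1)(v−φ₀))` for all `v > a`;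
(ii) `Ψ(v) = (nλ/(n−1))·Σ_{k=n+1}^∞ (v−a)^{k−n}/(k·(v−φ₀)^{k−n})` for all `v > a`;
(iii) `Ψ` is strictly increasing on `(a,∞)`; (iv) `Ψ(v) → 0` as `v → a⁺`. -/
theorem optimal_pool_threshold_distribution_properties
    (n : ℕ) (hn : 2 ≤ n) (lam φ₀ a : ℝ) (hlam : 0 < lam) (hφa : φ₀ < a)
    (Ψ : ℝ → ℝ)
    (hΨ : ∀ v, a < v →
      Ψ v = (n * lam / ((n : ℝ) - 1)) * ((v - φ₀) / (v - a)) ^ n *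
        ∫ t in a..v, (t - a) ^ n / (t - φ₀) ^ (n + 1)) :
    (∀ v, a < v →
        HasDerivAt Ψ
          ((n : ℝ) * lam / (((n : ℝ) - 1) * (v - φ₀)) -
            (n : ℝ) * (a - φ₀) / ((v - φ₀) * (v - a)) * Ψ v) v) ∧
      (∀ v, a < v →
        Ψ v = (n * lam / ((n : ℝ) - 1)) *
          ∑' k : ℕ, (v - a) ^ (k + 1) / (((k : ℝ) + n + 1) * (v - φ₀) ^ (k + 1))) ∧
      StrictMonoOn Ψ (Set.Ioi a) ∧
      Filter.Tendsto Ψ (nhdsWithin a (Set.Ioi a)) (nhds 0) := by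
  have hn2 : (2:ℝ) ≤ (n:ℝ) := by exact_mod_cast hn
  have hC : 0 < (n:ℝ) * lam / ((n:ℝ) - 1) :=
    div_pos (mul_pos (by linarith) hlam) (by linarith)
  set C : ℝ := (n:ℝ) * lam / ((n:ℝ) - 1) with hCdef
  -- series formula in ratio form
  have hΨ2 : ∀ x, a < x → Ψ x = C *
      ∑' k : ℕ, ((x-a)/(x-φ₀))^(k+1)/((k:ℝ)+n+1) := by
    intro x hx
    have hxφ : (0:ℝ) < x - φ₀ := by linarith
    have hxa : (0:ℝ) < x - a := by linarith
    rw [hΨ x hx, integral_eq_tsum n φ₀ a x hφa hx, mul_assoc]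
    congr 1
    rw [← tsum_mul_left]
    apply tsum_congr
    intro k
    have hqr : ((x-φ₀)/(x-a)) * ((x-a)/(x-φ₀)) = 1 := by
      field_simp
    rw [show k+n+1 = (k+1)+n from by omega, pow_add]
    calc ((x-φ₀)/(x-a))^n * (((x-a)/(x-φ₀))^(k+1) * ((x-a)/(x-φ₀))^n / ((k:ℝ)+n+1))
        = (((x-φ₀)/(x-a)) * ((x-a)/(x-φ₀)))^n *
            (((x-a)/(x-φ₀))^(k+1)/((k:ℝ)+n+1)) := by
          rw [mul_pow]; ring
      _ = ((x-a)/(x-φ₀))^(k+1)/((k:ℝ)+n+1) := by rw [hqr, one_pow, one_mul]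
  have hrx1 : ∀ x, a < x → (x-a)/(x-φ₀) < 1 := by
    intro x hx
    rw [div_lt_one (by linarith)]; linarith
  have hrx0 : ∀ x, a < x → 0 ≤ (x-a)/(x-φ₀) := by
    intro x hx
    have h1 : (0:ℝ) ≤ x - a := by linarith
    have h2 : (0:ℝ) < x - φ₀ := by linarith
    positivity
  refine ⟨?_, ?_, ?_, ?_⟩
  · -- (i) derivative
    intro v hv
    have hva : (0:ℝ) < v - a := by linarith
    have hvφ : (0:ℝ) < v - φ₀ := by linarith
    obtain ⟨m, rfl⟩ : ∃ m, n = m + 1 := ⟨n-1, by omega⟩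
    have hm1 : 1 ≤ m := by omega
    have hmR : (1:ℝ) ≤ (m:ℝ) := by exact_mod_cast hm1
    have hfint : IntervalIntegrable
        (fun t => (t-a)^(m+1)/(t-φ₀)^(m+1+1)) volume a v :=
      cont_div' φ₀ a v hφa hv.le _ _ (by continuity) (by continuity)
        (fun t ht => pow_ne_zero _ (sub_ne_zero.mpr (ne_of_gt ht)))
    have hmeas : StronglyMeasurableAtFilter
        (fun t => (t-a)^(m+1)/(t-φ₀)^(m+1+1)) (nhds v) volume :=
      ⟨Set.univ, Filter.univ_mem,
        (((measurable_id.sub_const a).pow_const (m+1)).div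
          ((measurable_id.sub_const φ₀).pow_const (m+1+1))).aestronglyMeasurable⟩
    have hcont : ContinuousAt (fun t => (t-a)^(m+1)/(t-φ₀)^(m+1+1)) v :=
      ContinuousAt.div (by fun_prop) (by fun_prop) (pow_ne_zero _ hvφ.ne')
    have hI : HasDerivAt (fun u => ∫ t in a..u, (t-a)^(m+1)/(t-φ₀)^(m+1+1))
        ((v-a)^(m+1)/(v-φ₀)^(m+1+1)) v :=
      intervalIntegral.integral_hasDerivAt_right hfint hmeas hcont
    have hH : HasDerivAt (fun x => ((x-φ₀)/(x-a))^(m+1))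
        ((↑(m+1) : ℝ) * ((v-φ₀)/(v-a))^m * ((φ₀-a)/(v-a)^2)) v := by
      have h := (aux_ratio_deriv φ₀ a v (by intro h; rw [h] at hva; simp at hva)).pow (m+1)
      simp only [Nat.add_sub_cancel] at h
      exact h
    have hΦ := (hH.mul hI).const_mul C
    have heq : Ψ =ᶠ[nhds v] fun x =>
        C * (((x-φ₀)/(x-a))^(m+1) * ∫ t in a..x, (t-a)^(m+1)/(t-φ₀)^(m+1+1)) := by
      filter_upwards [Ioi_mem_nhds hv] with x hx
      rw [hΨ x hx]; ring
    have hfinal := hΦ.congr_of_eventuallyEq heq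
    refine hfinal.congr_deriv ?_
    rw [hΨ v hv]
    set J : ℝ := ∫ t in a..v, (t-a)^(m+1)/(t-φ₀)^(m+1+1) with hJ
    rw [hCdef]
    push_cast
    have hmne : (m:ℝ) ≠ 0 := by linarith
    simp only [div_pow]
    field_simp
    ring
  · -- (ii) series
    intro v hv
    have hvφ : (0:ℝ) < v - φ₀ := by linarith
    rw [hΨ2 v hv]
    congr 1
    apply tsum_congr
    intro k
    rw [div_pow, div_div, mul_comm]
  · -- (iii) strict mono
    intro u hu v hv huv
    simp only [Set.mem_Ioi] at hu hv
    have huφ : (0:ℝ) < u - φ₀ := by linarith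
    have hvφ : (0:ℝ) < v - φ₀ := by linarith
    rw [hΨ2 u hu, hΨ2 v hv]
    apply mul_lt_mul_of_pos_left _ hC
    apply Summable.tsum_lt_tsum_of_nonneg (i := 0)
    · intro k
      have h0 := hrx0 u hu
      positivity
    · intro k
      have hd : (0:ℝ) < (k:ℝ)+n+1 := by positivity
      rw [div_le_div_iff_of_pos_right hd]
      exact pow_le_pow_left₀ (hrx0 u hu) (ratio_le φ₀ a u v hφa hu.le huv.le) _
    · have h := ratio_lt φ₀ a u v hφa hu huv
      have hd : (0:ℝ) < ((0:ℕ):ℝ)+n+1 := by positivity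
      rw [div_lt_div_iff_of_pos_right hd]
      simpa using pow_lt_pow_left₀ h (hrx0 u hu) (Nat.succ_ne_zero 0)
    · simpa using summable_aux n 0 ((v-a)/(v-φ₀)) (hrx0 v hv) (hrx1 v hv)
  · -- (iv) limit
    have hupper : ∀ x, a < x → Ψ x ≤ C * ((x-a)/(x-φ₀) * (1-(x-a)/(x-φ₀))⁻¹) := by
      intro x hx
      have hr0 := hrx0 x hx
      have hr1 := hrx1 x hx
      rw [hΨ2 x hx]
      apply mul_le_mul_of_nonneg_left _ hC.le
      have hts : ∑' k:ℕ, ((x-a)/(x-φ₀))^(k+1)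
          = (x-a)/(x-φ₀) * (1-(x-a)/(x-φ₀))⁻¹ := by
        simp_rw [pow_succ']
        rw [tsum_mul_left, tsum_geometric_of_lt_one hr0 hr1]
      rw [← hts]
      apply Summable.tsum_le_tsum _ (by simpa using summable_aux n 0 _ hr0 hr1) ?_
      · intro k
        apply div_le_self (by positivity)
        have h1 : (0:ℝ) ≤ (k:ℝ) := Nat.cast_nonneg k
        have h2 : (0:ℝ) ≤ (n:ℝ) := Nat.cast_nonneg n
        linarith
      · apply Summable.of_nonneg_of_le (fun k => by positivity) (fun k => ?_)
          (summable_geometric_of_lt_one hr0 hr1)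
        exact pow_le_pow_of_le_one hr0 hr1.le (by omega)
    have hlower : ∀ x, a < x → 0 ≤ Ψ x := by
      intro x hx
      rw [hΨ2 x hx]
      exact mul_nonneg hC.le (tsum_nonneg (fun k => by
        have := hrx0 x hx
        positivity))
    have h1 : Tendsto (fun x => (x-a)/(x-φ₀)) (nhdsWithin a (Set.Ioi a)) (nhds 0) := by
      have hca : ContinuousAt (fun x => (x-a)/(x-φ₀)) a :=
        ContinuousAt.div (by fun_prop) (by fun_prop) (sub_ne_zero.mpr (ne_of_gt hφa))
      have := hca.tendsto
      simp only [sub_self, zero_div] at this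
      exact this.mono_left nhdsWithin_le_nhds
    have hg : Tendsto (fun x => C * ((x-a)/(x-φ₀) * (1-(x-a)/(x-φ₀))⁻¹))
        (nhdsWithin a (Set.Ioi a)) (nhds 0) := by
      have h2 : Tendsto (fun x => (1 - (x-a)/(x-φ₀))) (nhdsWithin a (Set.Ioi a))
          (nhds (1 - 0)) := tendsto_const_nhds.sub h1
      have h3 := h2.inv₀ (by norm_num)
      have h4 := (h1.mul h3).const_mul C
      simpa using h4
    apply squeeze_zero' ?_ ?_ hg
    · filter_upwards [self_mem_nhdsWithin] with x hx
      exact hlower x hx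
    · filter_upwards [self_mem_nhdsWithin] with x hx
      exact hupper x hx
end

section
/- Let n ≥ 1 be an integer, λ ∈ (0,1], and 0 < a < b real numbers. Define, for v ∈ [a,b], fn(v) = ((v−a)/v)^n + (n−1)·λ·((v−a)/v)·∫_a^v (t−a)^{n−1}/t^n dt + n·∫_v^b [ (t−a)^{n−1}/t^n − (1−λ)·(t−a)^n/t^{n+1} ] dt. Then fn is nonincreasing on [a,b]. -/
open MeasureTheory

private lemma fnAux_contOn (a : ℝ) (m k : ℕ) :
    ContinuousOn (fun t : ℝ => (t - a) ^ m / t ^ k) (Set.Ioi 0) := by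
  apply ContinuousOn.div (by fun_prop) (by fun_prop)
  intro t ht
  exact pow_ne_zero _ (ne_of_gt ht)

private lemma fnAux_key_ineq {a : ℝ} (ha : 0 < a) (m : ℕ) {v : ℝ} (hav : a ≤ v) :
    (m : ℝ) * a * (∫ t in a..v, (t - a) ^ m / t ^ (m + 1)) ≤ (v - a) ^ (m + 1) / v ^ m := by
  have huIcc : Set.uIcc a v = Set.Icc a v := Set.uIcc_of_le hav
  have hsub : Set.uIcc a v ⊆ Set.Ioi 0 := by
    rw [huIcc]; exact fun t ht => lt_of_lt_of_le ha ht.1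
  have hint_g : IntervalIntegrable (fun t => (t - a) ^ m / t ^ (m + 1)) volume a v :=
    ((fnAux_contOn a m (m + 1)).mono hsub).intervalIntegrable
  set d : ℝ → ℝ := fun t => ((t - a) / t) ^ m + (m : ℝ) * a * ((t - a) ^ m / t ^ (m + 1))
    with hd_def
  have hcont_d : ContinuousOn d (Set.Ioi 0) := by
    apply ContinuousOn.add
    · exact (ContinuousOn.div (by fun_prop) (by fun_prop)
        (fun t ht => ne_of_gt ht)).pow m
    · exact (fnAux_contOn a m (m + 1)).const_smul ((m : ℝ) * a)
  have hint_d : IntervalIntegrable d volume a v := (hcont_d.mono hsub).intervalIntegrable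
  have hderiv : ∀ t ∈ Set.uIcc a v,
      HasDerivAt (fun t => (t - a) ^ (m + 1) / t ^ m) (d t) t := by
    intro t ht
    have ht0 : 0 < t := hsub ht
    have h1 : HasDerivAt (fun t : ℝ => (t - a) ^ (m + 1)) (((m : ℝ) + 1) * (t - a) ^ m) t := by
      have := ((hasDerivAt_id t).sub_const a).fun_pow (m + 1)
      simpa using this
    have h2 : HasDerivAt (fun t : ℝ => t ^ m) ((m : ℝ) * t ^ (m - 1)) t := hasDerivAt_pow m t
    have hd : HasDerivAt (fun t : ℝ => (t - a) ^ (m + 1) / t ^ m) _ t :=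
      h1.fun_div h2 (pow_ne_zero m ht0.ne')
    convert hd using 1
    rcases m with _ | k
    · simp [hd_def]
    · have htk : t ≠ 0 := ht0.ne'
      simp only [hd_def, div_pow, Nat.add_sub_cancel]
      field_simp
      ring
  have hFTC := intervalIntegral.integral_eq_sub_of_hasDerivAt hderiv hint_d
  have hzero : (a - a) ^ (m + 1) / a ^ m = 0 := by simp
  rw [hzero, sub_zero] at hFTC
  have hmono : (∫ t in a..v, (m : ℝ) * a * ((t - a) ^ m / t ^ (m + 1))) ≤ ∫ t in a..v, d t := by
    apply intervalIntegral.integral_mono_on hav (hint_g.const_mul _) hint_d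
    intro t ht
    have ht0 : 0 < t := lt_of_lt_of_le ha ht.1
    have : (0 : ℝ) ≤ ((t - a) / t) ^ m :=
      pow_nonneg (div_nonneg (sub_nonneg.2 ht.1) ht0.le) m
    simp only [hd_def]
    linarith
  rw [intervalIntegral.integral_const_mul] at hmono
  calc (m : ℝ) * a * (∫ t in a..v, (t - a) ^ m / t ^ (m + 1)) ≤ ∫ t in a..v, d t := hmono
    _ = (v - a) ^ (m + 1) / v ^ m := hFTC

/-- Let `n ≥ 1`, `λ ∈ (0,1]`, `0 < a < b`. Define, for `v ∈ [a,b]`,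
`fn(v) = ((v−a)/v)^n + (n−1)λ·((v−a)/v)·∫_a^v (t−a)^{n−1}/t^n dt
  + n·∫_v^b [(t−a)^{n−1}/t^n − (1−λ)(t−a)^n/t^{n+1}] dt`.
Then `fn` is nonincreasing on `[a,b]`. -/
theorem fn_antitoneOn
    (n : ℕ) (hn : 1 ≤ n) (lam a b : ℝ) (hlam : lam ∈ Set.Ioc (0 : ℝ) 1)
    (ha : 0 < a) (hab : a < b) :
    AntitoneOn
      (fun v : ℝ =>
        ((v - a) / v) ^ n +
          ((n : ℝ) - 1) * lam * ((v - a) / v) * (∫ t in a..v, (t - a) ^ (n - 1) / t ^ n) +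
          (n : ℝ) * ∫ t in v..b, ((t - a) ^ (n - 1) / t ^ n - (1 - lam) * (t - a) ^ n / t ^ (n + 1)))
      (Set.Icc a b) := by
  obtain ⟨m, rfl⟩ : ∃ m, n = m + 1 := ⟨n - 1, (Nat.succ_pred_eq_of_pos hn).symm⟩
  obtain ⟨hlam0, hlam1⟩ := hlam
  simp only [Nat.add_sub_cancel, Nat.cast_add, Nat.cast_one, add_sub_cancel_right]
  set g : ℝ → ℝ := fun t => (t - a) ^ m / t ^ (m + 1) with hg_def
  set h : ℝ → ℝ :=
    fun t => (t - a) ^ m / t ^ (m + 1) - (1 - lam) * (t - a) ^ (m + 1) / t ^ (m + 1 + 1)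
    with hh_def
  have hcont_g : ContinuousOn g (Set.Ioi 0) := fnAux_contOn a m (m + 1)
  have hcont_h : ContinuousOn h (Set.Ioi 0) := by
    apply ContinuousOn.sub (fnAux_contOn a m (m + 1))
    apply ContinuousOn.div (by fun_prop) (by fun_prop)
    intro t ht
    exact pow_ne_zero _ (ne_of_gt ht)
  have hsub : ∀ v : ℝ, 0 < v → Set.uIcc a v ⊆ Set.Ioi 0 := by
    intro v hv t ht
    rcases ht with ⟨h1, _⟩
    exact lt_of_lt_of_le (lt_min ha hv) h1
  have hsub_b : ∀ v : ℝ, 0 < v → Set.uIcc v b ⊆ Set.Ioi 0 := by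
    intro v hv t ht
    rcases ht with ⟨h1, _⟩
    exact lt_of_lt_of_le (lt_min hv (ha.trans hab)) h1
  -- derivative of the whole function at any v > 0
  set f : ℝ → ℝ := fun v =>
    ((v - a) / v) ^ (m + 1) +
      (m : ℝ) * lam * ((v - a) / v) * (∫ t in a..v, g t) +
      ((m : ℝ) + 1) * ∫ t in v..b, h t with hf_def
  set D : ℝ → ℝ := fun v =>
    ((m : ℝ) + 1) * ((v - a) / v) ^ m * (a / v ^ 2) +
      ((m : ℝ) * lam * (a / v ^ 2) * (∫ t in a..v, g t) +
        (m : ℝ) * lam * ((v - a) / v) * g v) +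
      ((m : ℝ) + 1) * -(h v) with hD_def
  have hderiv_f : ∀ v ∈ Set.Ioi (0 : ℝ), HasDerivAt f (D v) v := by
    intro v hv
    have hv0 : (0 : ℝ) < v := hv
    have hq : HasDerivAt (fun v : ℝ => (v - a) / v) (a / v ^ 2) v := by
      have : HasDerivAt (fun v : ℝ => (v - a) / v) _ v :=
        ((hasDerivAt_id v).sub_const a).fun_div (hasDerivAt_id v) hv0.ne'
      convert this using 1
      field_simp
      simp only [id]
      ring
    have hA : HasDerivAt (fun v : ℝ => ((v - a) / v) ^ (m + 1))
        (((m : ℝ) + 1) * ((v - a) / v) ^ m * (a / v ^ 2)) v := by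
      have := hq.fun_pow (m + 1)
      simpa using this
    have hF : HasDerivAt (fun v : ℝ => ∫ t in a..v, g t) (g v) v := by
      apply intervalIntegral.integral_hasDerivAt_right
        ((hcont_g.mono (hsub v hv0)).intervalIntegrable)
      · exact (hcont_g.stronglyMeasurableAtFilter isOpen_Ioi) v hv
      · exact hcont_g.continuousAt (isOpen_Ioi.mem_nhds hv)
    have hB : HasDerivAt (fun v : ℝ => (m : ℝ) * lam * ((v - a) / v) * (∫ t in a..v, g t))
        ((m : ℝ) * lam * (a / v ^ 2) * (∫ t in a..v, g t) +
          (m : ℝ) * lam * ((v - a) / v) * g v) v := by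
      exact (hq.const_mul ((m : ℝ) * lam)).mul hF
    have hH : HasDerivAt (fun v : ℝ => ∫ t in v..b, h t) (-(h v)) v := by
      apply intervalIntegral.integral_hasDerivAt_left
        ((hcont_h.mono (hsub_b v hv0)).intervalIntegrable)
      · exact (hcont_h.stronglyMeasurableAtFilter isOpen_Ioi) v hv
      · exact hcont_h.continuousAt (isOpen_Ioi.mem_nhds hv)
    exact (hA.add hB).add (hH.const_mul ((m : ℝ) + 1))
  have hIcc_sub : Set.Icc a b ⊆ Set.Ioi 0 := fun t ht => lt_of_lt_of_le ha ht.1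
  apply antitoneOn_of_deriv_nonpos (convex_Icc a b)
  · intro v hv
    exact ((hderiv_f v (hIcc_sub hv)).differentiableAt).continuousAt.continuousWithinAt
  · intro v hv
    rw [interior_Icc] at hv
    exact ((hderiv_f v (hIcc_sub (Set.mem_Icc_of_Ioo hv))).differentiableAt).differentiableWithinAt
  · intro v hv
    rw [interior_Icc] at hv
    have hv0 : (0 : ℝ) < v := ha.trans hv.1
    rw [(hderiv_f v hv0).deriv]
    -- show D v ≤ 0
    have hkey := fnAux_key_ineq ha m hv.1.le
    have hE : D v = lam * ((m : ℝ) * a * (∫ t in a..v, g t) / v ^ 2 -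
        (v - a) ^ (m + 1) / v ^ (m + 2)) := by
      simp only [hD_def, hh_def, hg_def, div_pow]
      have hv0' : v ≠ 0 := hv0.ne'
      field_simp
      ring
    rw [hE]
    apply mul_nonpos_of_nonneg_of_nonpos hlam0.le
    rw [sub_nonpos]
    have h2 : (v - a) ^ (m + 1) / v ^ m / v ^ 2 = (v - a) ^ (m + 1) / v ^ (m + 2) := by
      rw [div_div, ← pow_add]
    calc (m : ℝ) * a * (∫ t in a..v, g t) / v ^ 2
        ≤ (v - a) ^ (m + 1) / v ^ m / v ^ 2 := by
          gcongr
        _ = (v - a) ^ (m + 1) / v ^ (m + 2) := h2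
end

section
/- Let n ≥ 2 be an integer and 0 < a ≤ v real numbers. Then ∫_a^v (t−a)^{n−1}/t^n dt ≤ (v−a)^n / ( (n−1)·a·v^{n−1} ). -/
open MeasureTheory

/-- Let `n ≥ 2` and `0 < a ≤ v`. Then
`∫_a^v (t−a)^{n−1}/t^n dt ≤ (v−a)^n / ((n−1)·a·v^{n−1})`. -/
theorem integral_sub_pow_div_le
    (n : ℕ) (hn : 2 ≤ n) (a v : ℝ) (ha : 0 < a) (hav : a ≤ v) :
    (∫ t in a..v, (t - a) ^ (n - 1) / t ^ n) ≤
      (v - a) ^ n / (((n : ℝ) - 1) * a * v ^ (n - 1)) := by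
  obtain ⟨k, rfl⟩ : ∃ k, n = k + 2 := ⟨n - 2, by omega⟩
  set c : ℝ := ((k : ℝ) + 1) * a with hc
  have hcpos : 0 < c := by positivity
  set F : ℝ → ℝ := fun t => (t - a) ^ (k + 2) / (c * t ^ (k + 1)) with hF
  set G : ℝ → ℝ := fun t =>
    (t - a) ^ (k + 1) * (t + c) / (c * t ^ (k + 2)) with hG
  have hderiv : ∀ t ∈ Set.uIcc a v, HasDerivAt F (G t) t := by
    intro t ht
    rw [Set.uIcc_of_le hav] at ht
    have htpos : 0 < t := lt_of_lt_of_le ha ht.1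
    have ht0 : t ≠ 0 := ne_of_gt htpos
    have h1 : HasDerivAt (fun t : ℝ => (t - a) ^ (k + 2))
        ((↑(k + 2) : ℝ) * (t - a) ^ (k + 1)) t := by
      have := ((hasDerivAt_id t).sub_const a).fun_pow (k + 2)
      simpa using this
    have h2 : HasDerivAt (fun t : ℝ => c * t ^ (k + 1))
        (c * ((↑(k + 1) : ℝ) * t ^ k)) t := by
      have := (hasDerivAt_pow (k + 1) t).const_mul c
      simpa using this
    have hne : c * t ^ (k + 1) ≠ 0 := by positivity
    have h3 := h1.fun_div h2 hne
    refine h3.congr_deriv (Eq.symm ?_)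
    rw [hG]
    field_simp
    push_cast
    ring
  have hGcont : ContinuousOn G (Set.uIcc a v) := by
    apply ContinuousOn.div
    · fun_prop
    · fun_prop
    · intro t ht
      rw [Set.uIcc_of_le hav] at ht
      have : 0 < t := lt_of_lt_of_le ha ht.1
      positivity
  have hGint : IntervalIntegrable G volume a v := hGcont.intervalIntegrable
  have hfint : IntervalIntegrable (fun t => (t - a) ^ (k + 2 - 1) / t ^ (k + 2))
      volume a v := by
    apply ContinuousOn.intervalIntegrable
    apply ContinuousOn.div
    · fun_prop
    · fun_prop
    · intro t ht
      rw [Set.uIcc_of_le hav] at ht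
      have : 0 < t := lt_of_lt_of_le ha ht.1
      positivity
  have hmono : (∫ t in a..v, (t - a) ^ (k + 2 - 1) / t ^ (k + 2)) ≤
      ∫ t in a..v, G t := by
    apply intervalIntegral.integral_mono_on hav hfint hGint
    intro t ht
    have htpos : 0 < t := lt_of_lt_of_le ha ht.1
    have htsub : 0 ≤ t - a := sub_nonneg.mpr ht.1
    have hGrw : G t = (t - a) ^ (k + 1) / t ^ (k + 2) * ((t + c) / c) := by
      rw [hG, div_mul_div_comm]
      ring_nf
    have : (k + 2 - 1) = k + 1 := rfl
    rw [this, hGrw]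
    nth_rewrite 1 [← mul_one ((t - a) ^ (k + 1) / t ^ (k + 2))]
    gcongr
    rw [le_div_iff₀ hcpos]
    nlinarith [htpos.le]
  have hftc : (∫ t in a..v, G t) = F v - F a :=
    intervalIntegral.integral_eq_sub_of_hasDerivAt hderiv hGint
  have hFa : F a = 0 := by simp [hF]
  have hFv : F v = (v - a) ^ (k + 2) / (((↑(k + 2) : ℝ) - 1) * a * v ^ (k + 2 - 1)) := by
    rw [hF, hc]
    norm_num
    ring_nf
  calc (∫ t in a..v, (t - a) ^ (k + 2 - 1) / t ^ (k + 2)) ≤ ∫ t in a..v, G t := hmono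
    _ = F v - F a := hftc
    _ = F v := by rw [hFa]; ring
    _ = _ := hFv
end

section
/- Let n ≥ 1 be an integer, λ > 0, and 0 < a ≤ b real numbers. If λ·∫_a^b (t−a)^{n−1}/t^n dt ≤ ((b−a)/b)^{n−1}, then for every v ∈ [a,b] one has λ·∫_a^v (t−a)^{n−1}/t^n dt ≤ ((v−a)/v)^{n−1}. -/
open MeasureTheory intervalIntegral

private lemma hderiv_aux (a : ℝ) (m : ℕ) {t : ℝ} (ht : 0 < t) :
    HasDerivAt (fun t => ((t - a) / t) ^ (m + 1))
      (((m : ℝ) + 1) * a * (t - a) ^ m / t ^ (m + 2)) t := by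
  have htne : t ≠ 0 := ne_of_gt ht
  have h1 : HasDerivAt (fun t : ℝ => (t - a) / t) (a / t ^ 2) t := by
    have h := ((hasDerivAt_id t).sub_const a).div (hasDerivAt_id t) htne
    refine h.congr_deriv ?_; symm; simp only [id]
    field_simp; ring
  have h2 := h1.pow (m + 1)
  refine h2.congr_deriv ?_; symm
  simp only [Nat.add_sub_cancel, Nat.cast_add, Nat.cast_one]
  rw [div_pow]
  field_simp
  ring

private lemma intInt_aux (a c : ℝ) (p q : ℕ) {u w : ℝ} (hu : 0 < u) (huw : u ≤ w) :
    IntervalIntegrable (fun t : ℝ => c * (t - a) ^ p / t ^ q) volume u w := by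
  apply ContinuousOn.intervalIntegrable
  rw [Set.uIcc_of_le huw]
  apply ContinuousOn.div
  · fun_prop
  · fun_prop
  · intro t ht
    exact pow_ne_zero _ (ne_of_gt (lt_of_lt_of_le hu ht.1))

private lemma ftc_aux (a : ℝ) (m : ℕ) {u w : ℝ} (ha : 0 < a) (hu : a ≤ u) (huw : u ≤ w) :
    ∫ t in u..w, ((m : ℝ) + 1) * a * (t - a) ^ m / t ^ (m + 2)
      = ((w - a) / w) ^ (m + 1) - ((u - a) / u) ^ (m + 1) := by
  have hu0 : 0 < u := lt_of_lt_of_le ha hu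
  apply integral_eq_sub_of_hasDerivAt
  · intro t ht
    rw [Set.uIcc_of_le huw] at ht
    exact hderiv_aux a m (lt_of_lt_of_le hu0 ht.1)
  · exact intInt_aux a (((m : ℝ) + 1) * a) m (m + 2) hu0 huw

/-- Let `n ≥ 1`, `λ > 0`, `0 < a ≤ b`. If `λ·∫_a^b (t−a)^{n−1}/t^n dt ≤ ((b−a)/b)^{n−1}`,
then for every `v ∈ [a,b]`, `λ·∫_a^v (t−a)^{n−1}/t^n dt ≤ ((v−a)/v)^{n−1}`. -/
theorem integral_bound_propagates
    (n : ℕ) (hn : 1 ≤ n) (lam a b : ℝ) (hlam : 0 < lam) (ha : 0 < a) (hab : a ≤ b)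
    (h : lam * ∫ t in a..b, (t - a) ^ (n - 1) / t ^ n ≤ ((b - a) / b) ^ (n - 1)) :
    ∀ v ∈ Set.Icc a b,
      lam * ∫ t in a..v, (t - a) ^ (n - 1) / t ^ n ≤ ((v - a) / v) ^ (n - 1) := by
  rintro v ⟨hav, hvb⟩
  have hv0 : 0 < v := lt_of_lt_of_le ha hav
  have hb0 : 0 < b := lt_of_lt_of_le ha hab
  -- integrability of the main integrand on subintervals of [a, ∞)
  have hfi : ∀ {u w : ℝ}, a ≤ u → u ≤ w →
      IntervalIntegrable (fun t : ℝ => (t - a) ^ (n - 1) / t ^ n) volume u w := by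
    intro u w hu huw
    have := intInt_aux a 1 (n - 1) n (lt_of_lt_of_le ha hu) huw
    simpa using this
  rcases eq_or_lt_of_le hn with hn1 | hn2
  · -- case n = 1
    have hn1' : n = 1 := hn1.symm
    subst hn1'
    simp only [Nat.sub_self, pow_zero, pow_one] at h ⊢
    have hsplit := integral_add_adjacent_intervals (hfi le_rfl hav) (hfi hav hvb)
    simp only [Nat.sub_self, pow_zero, pow_one] at hsplit
    have htail : 0 ≤ ∫ t in v..b, (1 : ℝ) / t := by
      apply intervalIntegral.integral_nonneg hvb
      intro t ht
      have : 0 < t := lt_of_lt_of_le hv0 ht.1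
      positivity
    nlinarith [mul_nonneg hlam.le htail]
  · -- case n ≥ 2
    obtain ⟨m, rfl⟩ : ∃ m, n = m + 2 := ⟨n - 2, by omega⟩
    have hsub : m + 2 - 1 = m + 1 := by omega
    simp only [hsub] at h ⊢
    -- abbreviations
    set A := ∫ t in a..v, (t - a) ^ (m + 1) / t ^ (m + 2) with hA_def
    set B := ∫ t in v..b, (t - a) ^ (m + 1) / t ^ (m + 2) with hB_def
    set P : ℝ := ((v - a) / v) ^ (m + 1) with hP_def
    set Q : ℝ := ((b - a) / b) ^ (m + 1) - P with hQ_def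
    have hK : (0 : ℝ) < ((m : ℝ) + 1) * a := by positivity
    -- FTC identities
    have hgP : ∫ t in a..v, ((m : ℝ) + 1) * a * (t - a) ^ m / t ^ (m + 2) = P := by
      rw [ftc_aux a m ha le_rfl hav, hP_def]
      simp [sub_self]
    have hgQ : ∫ t in v..b, ((m : ℝ) + 1) * a * (t - a) ^ m / t ^ (m + 2) = Q := by
      rw [ftc_aux a m ha hav hvb, hQ_def]
    -- nonnegativity
    have hAnn : 0 ≤ A := by
      apply intervalIntegral.integral_nonneg hav
      intro t ht
      have ht0 : 0 < t := lt_of_lt_of_le ha ht.1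
      have : 0 ≤ t - a := by linarith [ht.1]
      positivity
    have hPnn : 0 ≤ P := by
      rw [hP_def]
      have : 0 ≤ v - a := by linarith
      positivity
    have hQnn : 0 ≤ Q := by
      rw [← hgQ]
      apply intervalIntegral.integral_nonneg hvb
      intro t ht
      have ht0 : 0 < t := lt_of_lt_of_le hv0 ht.1
      have : 0 ≤ t - a := by linarith [hav, ht.1]
      positivity
    -- pointwise nonnegativity of g
    have hgnn : ∀ t : ℝ, a ≤ t → 0 ≤ ((m : ℝ) + 1) * a * (t - a) ^ m / t ^ (m + 2) := by
      intro t ht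
      have ht0 : 0 < t := lt_of_lt_of_le ha ht
      have : 0 ≤ t - a := by linarith
      positivity
    -- key inequality 1 : K * A ≤ (v - a) * P
    have hI1 : ((m : ℝ) + 1) * a * A ≤ (v - a) * P := by
      have hle : ∫ t in a..v, ((m : ℝ) + 1) * a * ((t - a) ^ (m + 1) / t ^ (m + 2))
          ≤ ∫ t in a..v, (v - a) * (((m : ℝ) + 1) * a * (t - a) ^ m / t ^ (m + 2)) := by
        apply intervalIntegral.integral_mono_on hav
        · exact (hfi le_rfl hav).const_mul _
        · exact (intInt_aux a (((m : ℝ) + 1) * a) m (m + 2) ha hav).const_mul _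
        · intro t ht
          have hg := hgnn t ht.1
          calc ((m : ℝ) + 1) * a * ((t - a) ^ (m + 1) / t ^ (m + 2))
              = (t - a) * (((m : ℝ) + 1) * a * (t - a) ^ m / t ^ (m + 2)) := by ring
            _ ≤ (v - a) * (((m : ℝ) + 1) * a * (t - a) ^ m / t ^ (m + 2)) :=
                mul_le_mul_of_nonneg_right (by linarith [ht.2]) hg
      rwa [intervalIntegral.integral_const_mul, intervalIntegral.integral_const_mul,
        hgP] at hle
    -- key inequality 2 : (v - a) * Q ≤ K * B
    have hI2 : (v - a) * Q ≤ ((m : ℝ) + 1) * a * B := by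
      have hle : ∫ t in v..b, (v - a) * (((m : ℝ) + 1) * a * (t - a) ^ m / t ^ (m + 2))
          ≤ ∫ t in v..b, ((m : ℝ) + 1) * a * ((t - a) ^ (m + 1) / t ^ (m + 2)) := by
        apply intervalIntegral.integral_mono_on hvb
        · exact (intInt_aux a (((m : ℝ) + 1) * a) m (m + 2) hv0 hvb).const_mul _
        · exact (hfi hav hvb).const_mul _
        · intro t ht
          have hg := hgnn t (hav.trans ht.1)
          calc (v - a) * (((m : ℝ) + 1) * a * (t - a) ^ m / t ^ (m + 2))
              ≤ (t - a) * (((m : ℝ) + 1) * a * (t - a) ^ m / t ^ (m + 2)) :=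
                mul_le_mul_of_nonneg_right (by linarith [ht.1]) hg
            _ = ((m : ℝ) + 1) * a * ((t - a) ^ (m + 1) / t ^ (m + 2)) := by ring
      rwa [intervalIntegral.integral_const_mul, intervalIntegral.integral_const_mul,
        hgQ] at hle
    -- split the integral in the hypothesis
    have hsplit : A + B = ∫ t in a..b, (t - a) ^ (m + 1) / t ^ (m + 2) :=
      integral_add_adjacent_intervals (hfi le_rfl hav) (hfi hav hvb)
    have hmain : lam * (A + B) ≤ P + Q := by
      rw [hsplit, hQ_def]; linarith [h]
    -- conclude
    clear_value A B P Q
    show lam * A ≤ P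
    rcases eq_or_lt_of_le (by linarith : (0 : ℝ) ≤ P + Q) with hPQ | hPQ
    · have hP0 : P = 0 := by linarith
      have hA0 : A = 0 := by nlinarith
      rw [hA0, hP0, mul_zero]
    · have e1 := mul_le_mul_of_nonneg_right hI1 hQnn
      have e2 := mul_le_mul_of_nonneg_right hI2 hPnn
      have h1' : ((m : ℝ) + 1) * a * (A * Q) ≤ ((m : ℝ) + 1) * a * (B * P) := by
        linarith [e1, e2]
      have h1 : A * Q ≤ B * P := le_of_mul_le_mul_left h1' hK
      have e3 := mul_le_mul_of_nonneg_left h1 hlam.le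
      have e4 := mul_le_mul_of_nonneg_right hmain hPnn
      have h2 : lam * A * (P + Q) ≤ P * (P + Q) := by linarith [e3, e4]
      exact le_of_mul_le_mul_right h2 hPQ
end

section
/- Let n ≥ 2 be an integer and λ ∈ (0,1]. Then 0 ≤ 1 − (n/(n+λ))^n · ((n−1+λ)/(n−1))^{n−1} ≤ λ/(n+λ). -/
/-- Let `n ≥ 2` be an integer and `λ ∈ (0,1]`. Then
`0 ≤ 1 − (n/(n+λ))^n·((n−1+λ)/(n−1))^{n−1} ≤ λ/(n+λ)`. -/
theorem deterministic_reserve_threshold_bounds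
    (n : ℕ) (hn : 2 ≤ n) (lam : ℝ) (hlam : lam ∈ Set.Ioc (0 : ℝ) 1) :
    0 ≤ 1 - ((n : ℝ) / ((n : ℝ) + lam)) ^ n * (((n : ℝ) - 1 + lam) / ((n : ℝ) - 1)) ^ (n - 1) ∧
      1 - ((n : ℝ) / ((n : ℝ) + lam)) ^ n * (((n : ℝ) - 1 + lam) / ((n : ℝ) - 1)) ^ (n - 1) ≤
        lam / ((n : ℝ) + lam) := by
  obtain ⟨hl0, hl1⟩ := hlam
  obtain ⟨m, rfl⟩ : ∃ m, n = m + 1 := ⟨n - 1, by omega⟩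
  have hm : 1 ≤ m := by omega
  have hM : (1:ℝ) ≤ (m:ℝ) := by exact_mod_cast hm
  set M : ℝ := (m:ℝ) with hMdef
  have hMpos : 0 < M := by linarith
  have h1 : (0:ℝ) < M + 1 := by linarith
  have h2 : (0:ℝ) < M + lam := by linarith
  have h3 : (0:ℝ) < M + 1 + lam := by linarith
  have hcast : ((m + 1 : ℕ) : ℝ) = M + 1 := by push_cast; ring
  have hsub : m + 1 - 1 = m := rfl
  rw [hsub, hcast]
  have e1 : M + 1 - 1 + lam = M + lam := by ring
  have e2 : M + 1 - 1 = M := by ring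
  rw [e1, e2]
  set C : ℝ := (M + 1) / (M + 1 + lam) with hC
  set K : ℝ := ((M + 1) * (M + lam)) / (M * (M + 1 + lam)) with hK
  set B : ℝ := (M * (M + 1 + lam)) / ((M + 1) * (M + lam)) with hB
  have hCpos : 0 < C := by positivity
  have hBpos : 0 < B := by positivity
  have hE : ((M + 1) / (M + 1 + lam)) ^ (m + 1) * ((M + lam) / M) ^ m = C * K ^ m := by
    rw [hC, hK, pow_succ]
    rw [show (M + 1) * (M + lam) / (M * (M + 1 + lam)) =
      ((M + 1) / (M + 1 + lam)) * ((M + lam) / M) by field_simp, mul_pow]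
    ring
  rw [hE]
  -- Bernoulli lower bound for B^m
  have ha : (-2:ℝ) ≤ -lam / ((M + 1) * (M + lam)) := by
    have hden : (1:ℝ) ≤ (M + 1) * (M + lam) := by nlinarith
    have : lam / ((M + 1) * (M + lam)) ≤ 1 := by
      rw [div_le_one (by positivity)]; nlinarith
    rw [neg_div]; linarith
  have hber := one_add_mul_le_pow ha m
  have hbase : (1:ℝ) + (-lam / ((M + 1) * (M + lam))) = B := by
    rw [hB]; field_simp; ring
  rw [hbase] at hber
  rw [← hMdef] at hber
  have h4 : (0:ℝ) < (M + 1) * (M + lam) := by positivity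
  have hre : 1 + M * (-lam / ((M + 1) * (M + lam))) =
      ((M + 1) * (M + lam) - M * lam) / ((M + 1) * (M + lam)) := by
    field_simp; ring
  have hCle : C ≤ 1 + M * (-lam / ((M + 1) * (M + lam))) := by
    rw [hC, hre, div_le_div_iff₀ h3 h4]
    nlinarith [sq_nonneg lam]
  have hCB : C ≤ B ^ m := le_trans hCle hber
  have hKB : K * B = 1 := by rw [hK, hB]; field_simp
  constructor
  · -- C * K^m ≤ 1
    have hEB : (C * K ^ m) * B ^ m = C := by
      rw [mul_assoc, ← mul_pow, hKB, one_pow, mul_one]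
    have hBm : 0 < B ^ m := by positivity
    have : (C * K ^ m) * B ^ m ≤ 1 * B ^ m := by rw [hEB, one_mul]; exact hCB
    have := le_of_mul_le_mul_right this hBm
    linarith
  · -- C ≤ C * K^m
    have hK1 : (1:ℝ) ≤ K := by
      rw [hK, le_div_iff₀ (by positivity)]; nlinarith
    have hKm : (1:ℝ) ≤ K ^ m := one_le_pow₀ hK1
    have h5 : C ≤ C * K ^ m := le_mul_of_one_le_right hCpos.le hKm
    have hCval : 1 - lam / (M + 1 + lam) = C := by rw [hC]; field_simp; ring
    linarith
end

section
/- Let n ≥ 2 be an integer and let ã, ṽ be real numbers with 0 ≤ ã ≤ ṽ < 1. Then ∫_{ã}^{ṽ} u^{n−1}/(1−u) du ≤ (ṽ^n − ã^{n−1}·ṽ) / ( (n−1)·(1−ṽ) ). -/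
open MeasureTheory

lemma key_pow_ineq (m : ℕ) (a b : ℝ) (h0 : 0 ≤ a) (h : a ≤ b) :
    ((m : ℝ) + 1) * a ^ m * (b - a) ≤ b ^ (m + 1) - a ^ (m + 1) := by
  induction m with
  | zero => simp
  | succ k ih =>
    have hb : 0 ≤ b := h0.trans h
    have hak : 0 ≤ a ^ k := pow_nonneg h0 k
    have h1 : b * (((k : ℝ) + 1) * a ^ k * (b - a)) ≤ b * (b ^ (k + 1) - a ^ (k + 1)) :=
      mul_le_mul_of_nonneg_left ih hb
    have h2 : a * a ^ k * (b - a) ≤ b * a ^ k * (b - a) := by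
      apply mul_le_mul_of_nonneg_right (mul_le_mul_of_nonneg_right h hak)
      linarith
    have h3 : ((k : ℝ) + 1) * (a * a ^ k * (b - a)) ≤ ((k : ℝ) + 1) * (b * a ^ k * (b - a)) :=
      mul_le_mul_of_nonneg_left h2 (by positivity)
    push_cast
    simp only [pow_succ] at ih h1 h3 ⊢
    nlinarith [h1, h3]

/-- Let `n ≥ 2` and `0 ≤ ã ≤ ṽ < 1`. Then
`∫_{ã}^{ṽ} u^{n−1}/(1−u) du ≤ (ṽ^n − ã^{n−1}·ṽ) / ((n−1)(1−ṽ))`. -/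
theorem integral_pow_div_one_sub_le
    (n : ℕ) (hn : 2 ≤ n) (ta tv : ℝ) (h0 : 0 ≤ ta) (h1 : ta ≤ tv) (h2 : tv < 1) :
    (∫ u in ta..tv, u ^ (n - 1) / (1 - u)) ≤
      (tv ^ n - ta ^ (n - 1) * tv) / (((n : ℝ) - 1) * (1 - tv)) := by
  obtain ⟨m, rfl⟩ : ∃ m, n = m + 1 := ⟨n - 1, by omega⟩
  have hm : 1 ≤ m := by omega
  have hm' : (1:ℝ) ≤ m := by exact_mod_cast hm
  simp only [Nat.add_sub_cancel]
  have htv : (0:ℝ) < 1 - tv := by linarith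
  have huIcc : Set.uIcc ta tv = Set.Icc ta tv := Set.uIcc_of_le h1
  have hcont : ContinuousOn (fun u : ℝ => u ^ m / (1 - u)) (Set.uIcc ta tv) := by
    apply ContinuousOn.div (by fun_prop) (by fun_prop)
    intro x hx
    rw [huIcc] at hx
    have := hx.2
    intro hc
    nlinarith
  have hf : IntervalIntegrable (fun u : ℝ => u ^ m / (1 - u)) volume ta tv :=
    hcont.intervalIntegrable
  have hg : IntervalIntegrable (fun u : ℝ => u ^ m / (1 - tv)) volume ta tv := by
    apply ContinuousOn.intervalIntegrable
    fun_prop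
  have hmono : (∫ u in ta..tv, u ^ m / (1 - u)) ≤ ∫ u in ta..tv, u ^ m / (1 - tv) := by
    apply intervalIntegral.integral_mono_on h1 hf hg
    intro x hx
    have hx0 : 0 ≤ x := h0.trans hx.1
    have hx1 : 1 - tv ≤ 1 - x := by linarith [hx.2]
    exact div_le_div_of_nonneg_left (pow_nonneg hx0 m) htv hx1
  have hval : (∫ u in ta..tv, u ^ m / (1 - tv))
      = ((tv ^ (m + 1) - ta ^ (m + 1)) / ((m : ℝ) + 1)) / (1 - tv) := by
    rw [intervalIntegral.integral_div, integral_pow]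
  have hkey := key_pow_ineq m ta tv h0 h1
  calc (∫ u in ta..tv, u ^ m / (1 - u)) ≤ ∫ u in ta..tv, u ^ m / (1 - tv) := hmono
    _ = ((tv ^ (m + 1) - ta ^ (m + 1)) / ((m : ℝ) + 1)) / (1 - tv) := hval
    _ ≤ (tv ^ (m + 1) - ta ^ m * tv) / ((((m + 1 : ℕ) : ℝ) - 1) * (1 - tv)) := by
        rw [div_div, div_le_div_iff₀ (by positivity) (by push_cast; nlinarith)]
        push_cast
        simp only [pow_succ] at hkey ⊢
        nlinarith [mul_le_mul_of_nonneg_right hkey (le_of_lt htv)]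
end
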